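/- arXiv:1402.4276 — 5 statements merged into one kernel-verified Lean document; each statement's English description precedes it below -/
import Mathlib

section
/- Let Ω ⊆ ℝⁿ be nonempty, let F be a Taylorian 1-field on Ω with κ := Γ¹(F;Ω) > 0, and fix x ∈ ℝⁿ. Then there exists a unique v⁺ ∈ Λ_x such that inf_{a∈Ω} Ψ⁺(F,x,a,v⁺) = sup_{v∈Λ_x} inf_{a∈Ω} Ψ⁺(F,x,a,v); i.e. the map v ↦ inf_{a∈Ω} Ψ⁺(F,x,a,v) attains its maximum on Λ_x at a unique point. -/
noncomputable section

open scoped RealInnerProductSpace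

section GammaDefs

variable {H : Type*} [NormedAddCommGroup H] [InnerProductSpace ℝ H]

/-- Evaluation of the first-degree polynomial `F(x)` at `a`:
`F(x)(a) = f_x + ⟨D_xf, a - x⟩`. -/
def fieldEval (f : H → ℝ) (Df : H → H) (x a : H) : ℝ :=
  f x + ⟪Df x, a - x⟫

/-- `Γ¹(F; x, y) = 2 · sup_{a} |F(x)(a) - F(y)(a)| / (‖x-a‖² + ‖y-a‖²)` for `x ≠ y`. -/
def gammaPair (f : H → ℝ) (Df : H → H) (x y : H) : ℝ :=
  ⨆ a : H, 2 * |fieldEval f Df x a - fieldEval f Df y a| / (‖x - a‖ ^ 2 + ‖y - a‖ ^ 2)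

/-- The set of values `Γ¹(F; x, y)` for `x ≠ y` ranging over `S`. -/
def gammaVals (f : H → ℝ) (Df : H → H) (S : Set H) : Set ℝ :=
  {t | ∃ x ∈ S, ∃ y ∈ S, x ≠ y ∧ t = gammaPair f Df x y}

/-- `Γ¹(F; S) = sup_{x ≠ y ∈ S} Γ¹(F; x, y)` (real supremum, `0` if `S` has at most one point). -/
def gammaOn (f : H → ℝ) (Df : H → H) (S : Set H) : ℝ :=
  sSup (gammaVals f Df S)

end GammaDefs

section LipDefs

variable {α β : Type*} [NormedAddCommGroup α] [NormedAddCommGroup β]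

/-- The set of difference quotients `‖g x - g y‖ / ‖x - y‖`, `x ≠ y ∈ S`. -/
def lipVals (g : α → β) (S : Set α) : Set ℝ :=
  {t | ∃ x ∈ S, ∃ y ∈ S, x ≠ y ∧ t = ‖g x - g y‖ / ‖x - y‖}

/-- `Lip(g; S) = sup_{x ≠ y ∈ S} ‖g x - g y‖ / ‖x - y‖` (real supremum). -/
def lipOn (g : α → β) (S : Set α) : ℝ :=
  sSup (lipVals g S)

end LipDefs

section PsiDefs

variable {H : Type*} [NormedAddCommGroup H] [InnerProductSpace ℝ H]

/-- `v_{a,b} = ½(D_af + D_bf) + (κ/2)(b - a)`. -/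
def vab (Df : H → H) (κ : ℝ) (a b : H) : H :=
  (1 / 2 : ℝ) • (Df a + Df b) + (κ / 2) • (b - a)

/-- `α_{a,b}`. -/
def alphaab (f : H → ℝ) (Df : H → H) (κ : ℝ) (a b : H) : ℝ :=
  2 * κ * (f a - f b) + κ * ⟪Df a + Df b, b - a⟫
    - 1 / 2 * ‖Df a - Df b‖ ^ 2 + κ ^ 2 / 2 * ‖a - b‖ ^ 2

/-- `β_{a,b}(x)`. -/
def betaab (Df : H → H) (κ : ℝ) (a b x : H) : ℝ :=
  ‖(1 / 2 : ℝ) • (Df a - Df b) + (κ / 2) • ((2 : ℝ) • x - a - b)‖ ^ 2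

/-- `r_{a,b}(x) = √(α_{a,b} + β_{a,b}(x))`. -/
def rab (f : H → ℝ) (Df : H → H) (κ : ℝ) (a b x : H) : ℝ :=
  Real.sqrt (alphaab f Df κ a b + betaab Df κ a b x)

/-- `Λ_x = {v : ‖v - v_{a,b}‖ ≤ r_{a,b}(x) for all a, b ∈ Ω}`. -/
def Lambda (f : H → ℝ) (Df : H → H) (κ : ℝ) (Ω : Set H) (x : H) : Set H :=
  {v | ∀ a ∈ Ω, ∀ b ∈ Ω, ‖v - vab Df κ a b‖ ≤ rab f Df κ a b x}

/-- `Ψ⁺(F, x, a, v)`. -/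
def PsiPlus (f : H → ℝ) (Df : H → H) (κ : ℝ) (x a v : H) : ℝ :=
  f a + 1 / 2 * ⟪Df a + v, x - a⟫ + κ / 4 * ‖a - x‖ ^ 2 - 1 / (4 * κ) * ‖Df a - v‖ ^ 2

/-- `Ψ⁻(F, x, a, v)`. -/
def PsiMinus (f : H → ℝ) (Df : H → H) (κ : ℝ) (x a v : H) : ℝ :=
  f a + 1 / 2 * ⟪Df a + v, x - a⟫ - κ / 4 * ‖a - x‖ ^ 2 + 1 / (4 * κ) * ‖Df a - v‖ ^ 2

/-- `inf_{a ∈ Ω} Ψ⁺(F, x, a, v)`. -/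
def infPsiPlus (f : H → ℝ) (Df : H → H) (κ : ℝ) (Ω : Set H) (x v : H) : ℝ :=
  sInf {t | ∃ a ∈ Ω, t = PsiPlus f Df κ x a v}

/-- `sup_{a ∈ Ω} Ψ⁻(F, x, a, v)`. -/
def supPsiMinus (f : H → ℝ) (Df : H → H) (κ : ℝ) (Ω : Set H) (x v : H) : ℝ :=
  sSup {t | ∃ a ∈ Ω, t = PsiMinus f Df κ x a v}

/-- `u⁺(x) = sup_{v ∈ Λ_x} inf_{a ∈ Ω} Ψ⁺(F, x, a, v)`. -/
def uPlus (f : H → ℝ) (Df : H → H) (κ : ℝ) (Ω : Set H) (x : H) : ℝ :=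
  sSup {t | ∃ v ∈ Lambda f Df κ Ω x, t = infPsiPlus f Df κ Ω x v}

/-- `u⁻(x) = inf_{v ∈ Λ_x} sup_{a ∈ Ω} Ψ⁻(F, x, a, v)`. -/
def uMinus (f : H → ℝ) (Df : H → H) (κ : ℝ) (Ω : Set H) (x : H) : ℝ :=
  sInf {t | ∃ v ∈ Lambda f Df κ Ω x, t = supPsiMinus f Df κ Ω x v}

/-- `(g, Dg)` is a minimal Lipschitz extension of the 1-field `(f, Df)` of domain `Ω` to `H`. -/
def IsMLE (f : H → ℝ) (Df : H → H) (Ω : Set H) (g : H → ℝ) (Dg : H → H) : Prop :=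
  (∀ x ∈ Ω, g x = f x ∧ Dg x = Df x) ∧ gammaOn g Dg Set.univ = gammaOn f Df Ω

/-- Over extremal MLE. -/
def IsOverExtremal (f : H → ℝ) (Df : H → H) (Ω : Set H) (g₁ : H → ℝ) (Dg₁ : H → H) : Prop :=
  IsMLE f Df Ω g₁ Dg₁ ∧ ∀ g Dg, IsMLE f Df Ω g Dg → ∀ x, g x ≤ g₁ x

/-- Under extremal MLE. -/
def IsUnderExtremal (f : H → ℝ) (Df : H → H) (Ω : Set H) (g₂ : H → ℝ) (Dg₂ : H → H) : Prop :=
  IsMLE f Df Ω g₂ Dg₂ ∧ ∀ g Dg, IsMLE f Df Ω g Dg → ∀ x, g₂ x ≤ g x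

/-- Absolutely minimal Lipschitz extension. -/
def IsAMLE (f : H → ℝ) (Df : H → H) (Ω : Set H) (g : H → ℝ) (Dg : H → H) : Prop :=
  IsMLE f Df Ω g Dg ∧
    ∀ V : Set H, V.Nonempty → IsOpen V → Bornology.IsBounded V → closure V ⊆ Ωᶜ →
      gammaOn g Dg V = gammaOn g Dg (frontier V)

end PsiDefs

/-!
Write `P_a, N_a` for the values at `x` of the paraboloids `F(a) ± (κ/2)‖· - a‖²` and `u_a, w_a`
for their gradients there. Then `Ψ⁺(F, x, a, v) = P_a - ‖v - u_a‖² / (4κ)`, and, as soon as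
`α_{a,b} ≥ 0` (the Taylorian bound `Γ¹(F; b, a) ≤ κ` at its optimal test point), `v ∈ Λ_x` iff
`‖v - u_a‖² + ‖v - w_b‖² ≤ 4κ (P_a - N_b)` for all `a, b ∈ Ω`.

Finitely many of these constraints have a common solution: by Sion's minimax theorem it suffices to
satisfy each weighted average of them, and the weighted average of the `u_a` does. By compactness
`Λ_x` is then a nonempty compact convex set. On it, `v ↦ inf_a Ψ⁺(F, x, a, v)` is an infimum of
continuous `1/(2κ)`-strongly concave functions, hence upper semicontinuous and strictly concave, so
it attains its maximum at exactly one point.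
-/

open Set

section Convexity

variable {E : Type*}

theorem ConvexOn.sum [AddCommGroup E] [Module ℝ E] {s : Set E} {ι : Type*} (t : Finset ι)
    {f : ι → E → ℝ} (hs : Convex ℝ s) (hf : ∀ i ∈ t, ConvexOn ℝ s (f i)) :
    ConvexOn ℝ s fun x => ∑ i ∈ t, f i x := by
  classical
  induction t using Finset.induction_on with
  | empty => simpa using convexOn_const (0 : ℝ) hs
  | insert a t ha ih =>
    simp_rw [Finset.sum_insert ha]
    exact (hf a (Finset.mem_insert_self a t)).add
      (ih fun i hi => hf i (Finset.mem_insert_of_mem hi))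

theorem StrongConcaveOn.ciInf [NormedAddCommGroup E] [NormedSpace ℝ E] {s : Set E} {m : ℝ}
    {ι : Type*} [Nonempty ι] {F : ι → E → ℝ} (hF : ∀ i, StrongConcaveOn s m (F i))
    (hbdd : ∀ x ∈ s, BddBelow (range fun i => F i x)) :
    StrongConcaveOn s m fun x => ⨅ i, F i x := by
  refine ⟨(hF (Classical.arbitrary ι)).1, fun x hx y hy a b ha hb hab => le_ciInf fun i => ?_⟩
  calc a • (⨅ j, F j x) + b • (⨅ j, F j y) + a * b * (m / 2 * ‖x - y‖ ^ 2)
      ≤ a • F i x + b • F i y + a * b * (m / 2 * ‖x - y‖ ^ 2) := by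
        gcongr
        exacts [ciInf_le (hbdd x hx) i, ciInf_le (hbdd y hy) i]
    _ ≤ F i (a • x + b • y) := (hF i).2 hx hy ha hb hab

theorem StrictConcaveOn.existsUnique_eq_sSup_image [TopologicalSpace E] [AddCommGroup E]
    [Module ℝ E] {s : Set E} {g : E → ℝ} (hg : StrictConcaveOn ℝ s g) (hne : s.Nonempty)
    (hs : IsCompact s) (husc : UpperSemicontinuousOn g s) :
    ∃! v, v ∈ s ∧ g v = sSup (g '' s) := by
  obtain ⟨v, hv, hmax⟩ := husc.exists_isMaxOn hne hs
  have hsup : sSup (g '' s) = g v :=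
    IsGreatest.csSup_eq ⟨mem_image_of_mem g hv, forall_mem_image.2 hmax⟩
  refine ⟨v, ⟨hv, hsup.symm⟩, fun w ⟨hw, hgw⟩ => ?_⟩
  rw [hsup] at hgw
  exact hg.eq_of_isMaxOn (fun z hz => hgw ▸ hmax hz) hmax hw hv

end Convexity

section FiniteConstraints

variable {ι ι' : Type*} [Fintype ι] [Fintype ι']

section PseudoMetricSpace

variable {M : Type*} [PseudoMetricSpace M] (u : ι → M) (w : ι' → M) (p : ι → ℝ) (q : ι' → ℝ)

/-- The Lagrangian of the constraints `dist v (u i) ^ 2 + dist v (w j) ^ 2 ≤ p i - q j`, with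
separate weights on the `i`- and `j`-sides so that it is linear in the weights. -/
def sqDistLagrangian (v : M) (y : (ι → ℝ) × (ι' → ℝ)) : ℝ :=
  ∑ i, y.1 i * (dist v (u i) ^ 2 - p i) + ∑ j, y.2 j * (dist v (w j) ^ 2 + q j)

theorem sqDistLagrangian_single [DecidableEq ι] [DecidableEq ι'] (v : M) (i : ι) (j : ι') :
    sqDistLagrangian u w p q v (Pi.single i 1, Pi.single j 1)
      = dist v (u i) ^ 2 + dist v (w j) ^ 2 - (p i - q j) := by
  simp only [sqDistLagrangian, Pi.single_apply, ite_mul, one_mul, zero_mul, Finset.sum_ite_eq',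
    Finset.mem_univ, if_true]
  ring

theorem continuous_sqDistLagrangian :
    Continuous fun vy : M × ((ι → ℝ) × (ι' → ℝ)) => sqDistLagrangian u w p q vy.1 vy.2 := by
  unfold sqDistLagrangian
  fun_prop

theorem concaveOn_sqDistLagrangian {t : Set ((ι → ℝ) × (ι' → ℝ))} (ht : Convex ℝ t) (v : M) :
    ConcaveOn ℝ t (sqDistLagrangian u w p q v) := by
  refine ⟨ht, fun y _ z _ a b _ _ _ => le_of_eq ?_⟩
  simp only [sqDistLagrangian, Prod.fst_add, Prod.snd_add, Prod.smul_fst, Prod.smul_snd,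
    Pi.add_apply, Pi.smul_apply, smul_eq_mul, add_mul, mul_assoc, Finset.sum_add_distrib,
    ← Finset.mul_sum]
  ring

end PseudoMetricSpace

theorem convexOn_sqDistLagrangian {E : Type*} [SeminormedAddCommGroup E] [NormedSpace ℝ E]
    (u : ι → E) (w : ι' → E) (p : ι → ℝ) (q : ι' → ℝ) {s : Set E} (hs : Convex ℝ s)
    {y : (ι → ℝ) × (ι' → ℝ)} (hy₁ : ∀ i, 0 ≤ y.1 i) (hy₂ : ∀ j, 0 ≤ y.2 j) :
    ConvexOn ℝ s fun v => sqDistLagrangian u w p q v y := by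
  have hsq (z : E) : ConvexOn ℝ s fun v => dist v z ^ 2 :=
    (convexOn_dist z hs).pow (fun _ _ => dist_nonneg) 2
  exact (ConvexOn.sum _ hs fun i _ => ((hsq (u i)).add_const (-p i)).smul (hy₁ i)).add
    (ConvexOn.sum _ hs fun j _ => ((hsq (w j)).add_const (q j)).smul (hy₂ j))

variable {H : Type*} [NormedAddCommGroup H] [InnerProductSpace ℝ H]
  {u : ι → H} {w : ι' → H} {p : ι → ℝ} {q : ι' → ℝ}

theorem sqDistLagrangian_sum_smul_nonpos (h : ∀ i j, dist (u i) (w j) ^ 2 ≤ p i - q j)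
    {μ : ι → ℝ} {ν : ι' → ℝ} (hμ : μ ∈ stdSimplex ℝ ι) (hν : ν ∈ stdSimplex ℝ ι') :
    sqDistLagrangian u w p q (∑ k, μ k • u k) (μ, ν) ≤ 0 := by
  set c := ∑ k, μ k • u k
  have hc : ∑ i, μ i • (c - u i) = 0 := by
    simp [smul_sub, Finset.sum_sub_distrib, ← Finset.sum_smul, hμ.2, c]
  have hsplit : sqDistLagrangian u w p q c (μ, ν)
      = ∑ i, ∑ j, μ i * ν j * (dist c (u i) ^ 2 + dist c (w j) ^ 2 - (p i - q j)) := by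
    calc _ = (∑ i, μ i * (dist c (u i) ^ 2 - p i)) * ∑ j, ν j
          + (∑ i, μ i) * ∑ j, ν j * (dist c (w j) ^ 2 + q j) := by
          rw [sqDistLagrangian, hμ.2, hν.2]; ring
      _ = _ := by
        rw [Finset.sum_mul_sum, Finset.sum_mul_sum, ← Finset.sum_add_distrib]
        refine Finset.sum_congr rfl fun i _ => ?_
        rw [← Finset.sum_add_distrib]
        exact Finset.sum_congr rfl fun j _ => by ring
  -- `dist c a ^ 2 + dist c b ^ 2 - dist a b ^ 2 = 2 ⟪c - a, c - b⟫`, which averages to zero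
  have hinner : ∑ i, ∑ j, μ i * ν j * (2 * ⟪c - u i, c - w j⟫)
      = 2 * ⟪∑ i, μ i • (c - u i), ∑ j, ν j • (c - w j)⟫ := by
    rw [sum_inner, Finset.mul_sum]
    refine Finset.sum_congr rfl fun i _ => ?_
    rw [inner_sum, Finset.mul_sum]
    refine Finset.sum_congr rfl fun j _ => ?_
    rw [real_inner_smul_left, real_inner_smul_right]
    ring
  rw [hc, inner_zero_left, mul_zero] at hinner
  rw [hsplit, ← hinner]
  refine Finset.sum_le_sum fun i _ => Finset.sum_le_sum fun j _ => ?_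
  refine mul_le_mul_of_nonneg_left ?_ (mul_nonneg (hμ.1 i) (hν.1 j))
  have hpar : dist (u i) (w j) ^ 2
      = dist c (u i) ^ 2 + dist c (w j) ^ 2 - 2 * ⟪c - u i, c - w j⟫ := by
    rw [dist_eq_norm, dist_eq_norm, dist_eq_norm, show u i - w j = (c - w j) - (c - u i) by abel,
      norm_sub_sq_real, real_inner_comm]
    ring
  linarith [h i j]

theorem exists_sq_dist_add_sq_dist_le [Nonempty ι] [Nonempty ι'] (u : ι → H) (w : ι' → H)
    (p : ι → ℝ) (q : ι' → ℝ) (h : ∀ i j, dist (u i) (w j) ^ 2 ≤ p i - q j) :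
    ∃ v, ∀ i j, dist v (u i) ^ 2 + dist v (w j) ^ 2 ≤ p i - q j := by
  classical
  set X := convexHull ℝ (range u)
  set Y := stdSimplex ℝ ι ×ˢ stdSimplex ℝ ι'
  have hX : Convex ℝ X := convex_convexHull ℝ _
  have hL := continuous_sqDistLagrangian u w p q
  obtain ⟨v, -, y, hy, hsaddle⟩ := Sion.exists_isSaddlePointOn (f := sqDistLagrangian u w p q)
    ((range_nonempty u).mono (subset_convexHull ℝ _)) hX ((finite_range u).isCompact_convexHull ℝ)
    (fun y _ => (hL.comp (Continuous.prodMk_left y)).continuousOn.lowerSemicontinuousOn)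
    (fun y hy => (convexOn_sqDistLagrangian u w p q hX hy.1.1 hy.2.1).quasiconvexOn)
    ((convex_stdSimplex ℝ ι).prod (convex_stdSimplex ℝ ι'))
    (Nonempty.prod ⟨_, single_mem_stdSimplex ℝ (Classical.arbitrary ι)⟩
      ⟨_, single_mem_stdSimplex ℝ (Classical.arbitrary ι')⟩)
    ((isCompact_stdSimplex ℝ ι).prod (isCompact_stdSimplex ℝ ι'))
    (fun v _ => (hL.comp (Continuous.prodMk_right v)).continuousOn.upperSemicontinuousOn)
    (fun v _ => (concaveOn_sqDistLagrangian u w p q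
      ((convex_stdSimplex ℝ ι).prod (convex_stdSimplex ℝ ι')) v).quasiconcaveOn)
  refine ⟨v, fun i j => ?_⟩
  -- the saddle point inequality between the vertex `(i, j)` and the barycentre of the `u` for `y`
  have hvertex := hsaddle (∑ k, y.1 k • u k)
    (hX.sum_mem (fun k _ => hy.1.1 k) hy.1.2 fun k _ => subset_convexHull ℝ _ (mem_range_self k))
    (Pi.single i 1, Pi.single j 1) ⟨single_mem_stdSimplex ℝ i, single_mem_stdSimplex ℝ j⟩
  rw [sqDistLagrangian_single] at hvertex
  linarith [sqDistLagrangian_sum_smul_nonpos h hy.1 hy.2]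

end FiniteConstraints

theorem norm_sub_sq_div_two_le {E : Type*} [SeminormedAddCommGroup E] (p q c : E) :
    ‖p - q‖ ^ 2 / 2 ≤ ‖p - c‖ ^ 2 + ‖q - c‖ ^ 2 := by
  have h := norm_sub_le_norm_sub_add_norm_sub p c q
  rw [norm_sub_rev c q] at h
  nlinarith [pow_le_pow_left₀ (norm_nonneg _) h 2, sq_nonneg (‖p - c‖ - ‖q - c‖)]

section Taylorian

variable {H : Type*} [NormedAddCommGroup H] [InnerProductSpace ℝ H] {f : H → ℝ} {Df : H → H}

theorem fieldEval_sub_fieldEval (p q c : H) :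
    fieldEval f Df p c - fieldEval f Df q c
      = (f p - fieldEval f Df q p) + ⟪Df p - Df q, c - p⟫ := by
  simp only [fieldEval, inner_sub_left, inner_sub_right]
  ring

theorem bddAbove_range_gammaPair {p q : H} (hpq : p ≠ q) :
    BddAbove (range fun c => 2 * |fieldEval f Df p c - fieldEval f Df q c|
      / (‖p - c‖ ^ 2 + ‖q - c‖ ^ 2)) := by
  set A := |f p - fieldEval f Df q p|
  set B := ‖Df p - Df q‖
  set s := ‖p - q‖ ^ 2 / 2
  have hs : 0 < s := by have := norm_pos_iff.2 (sub_ne_zero.2 hpq); positivity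
  refine ⟨(2 * A + B) / s + B, forall_mem_range.2 fun c => ?_⟩
  set t := ‖p - c‖
  set D := ‖p - c‖ ^ 2 + ‖q - c‖ ^ 2
  have hsD : s ≤ D := norm_sub_sq_div_two_le p q c
  have htD : t ^ 2 ≤ D := le_add_of_nonneg_right (sq_nonneg _)
  have hnum : |fieldEval f Df p c - fieldEval f Df q c| ≤ A + B * t := by
    rw [fieldEval_sub_fieldEval]
    refine (abs_add_le _ _).trans ?_
    gcongr
    simpa only [B, t, norm_sub_rev p c] using abs_real_inner_le_norm (Df p - Df q) (c - p)
  have hA : 0 ≤ A := abs_nonneg _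
  have hB : 0 ≤ B := norm_nonneg _
  rw [div_le_iff₀ (hs.trans_le hsD)]
  calc 2 * |fieldEval f Df p c - fieldEval f Df q c| ≤ (2 * A + B) + B * t ^ 2 := by
        nlinarith [sq_nonneg (t - 1)]
    _ ≤ (2 * A + B) / s * D + B * D := by
        gcongr
        rw [div_mul_eq_mul_div, le_div_iff₀ hs]
        gcongr
    _ = _ := by ring

theorem two_mul_fieldEval_sub_le {p q : H} (hpq : p ≠ q) {κ : ℝ} (hκ : gammaPair f Df p q ≤ κ)
    (c : H) :
    2 * (fieldEval f Df p c - fieldEval f Df q c) ≤ κ * (‖p - c‖ ^ 2 + ‖q - c‖ ^ 2) := by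
  have hD : 0 < ‖p - c‖ ^ 2 + ‖q - c‖ ^ 2 := by
    have := norm_pos_iff.2 (sub_ne_zero.2 hpq)
    exact lt_of_lt_of_le (by positivity) (norm_sub_sq_div_two_le p q c)
  have h := (le_ciSup (bddAbove_range_gammaPair hpq) c).trans hκ
  rw [div_le_iff₀ hD] at h
  linarith [le_abs_self (fieldEval f Df p c - fieldEval f Df q c)]

-- `c` minimises the left-hand side, a quadratic polynomial in `c`.
theorem alphaab_div_eq {κ : ℝ} (hκ : κ ≠ 0) (a b : H) :
    let c := (2 * κ)⁻¹ • (κ • (a + b) + (Df b - Df a))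
    κ * (‖b - c‖ ^ 2 + ‖a - c‖ ^ 2) - 2 * (fieldEval f Df b c - fieldEval f Df a c)
      = alphaab f Df κ a b / κ := by
  intro c
  simp only [c, alphaab, fieldEval, ← real_inner_self_eq_norm_sq, inner_add_left,
    inner_add_right, inner_sub_left, inner_sub_right, real_inner_smul_left, real_inner_smul_right]
  simp only [real_inner_comm]
  field_simp
  ring

theorem alphaab_nonneg {κ : ℝ} (hκ : 0 < κ) {a b : H}
    (h : ∀ c, 2 * (fieldEval f Df b c - fieldEval f Df a c) ≤ κ * (‖b - c‖ ^ 2 + ‖a - c‖ ^ 2)) :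
    0 ≤ alphaab f Df κ a b := by
  have hc := alphaab_div_eq (f := f) (Df := Df) hκ.ne' a b
  by_contra! hneg
  linarith [h ((2 * κ)⁻¹ • (κ • (a + b) + (Df b - Df a))), div_neg_of_neg_of_pos hneg hκ]

theorem alphaab_nonneg_of_bddAbove {Ω : Set H} (hTay : BddAbove (gammaVals f Df Ω))
    (hκ : 0 < gammaOn f Df Ω) {a b : H} (ha : a ∈ Ω) (hb : b ∈ Ω) :
    0 ≤ alphaab f Df (gammaOn f Df Ω) a b := by
  rcases eq_or_ne b a with rfl | hba
  · simp [alphaab]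
  · exact alphaab_nonneg hκ (two_mul_fieldEval_sub_le hba (le_csSup hTay ⟨b, hb, a, ha, hba, rfl⟩))

end Taylorian

section Paraboloids

variable {H : Type*} [NormedAddCommGroup H] [InnerProductSpace ℝ H]

def upperParabola (f : H → ℝ) (Df : H → H) (κ : ℝ) (a x : H) : ℝ :=
  fieldEval f Df a x + κ / 2 * ‖x - a‖ ^ 2

def lowerParabola (f : H → ℝ) (Df : H → H) (κ : ℝ) (a x : H) : ℝ :=
  fieldEval f Df a x - κ / 2 * ‖x - a‖ ^ 2

def upperParabolaGrad (Df : H → H) (κ : ℝ) (a x : H) : H := Df a + κ • (x - a)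

def lowerParabolaGrad (Df : H → H) (κ : ℝ) (a x : H) : H := Df a - κ • (x - a)

variable {f : H → ℝ} {Df : H → H} {κ : ℝ}

theorem psiPlus_eq (hκ : κ ≠ 0) (x a v : H) :
    PsiPlus f Df κ x a v
      = upperParabola f Df κ a x - dist v (upperParabolaGrad Df κ a x) ^ 2 / (4 * κ) := by
  rw [PsiPlus, upperParabola, upperParabolaGrad, fieldEval, dist_eq_norm]
  simp only [← real_inner_self_eq_norm_sq, inner_add_left, inner_add_right, inner_sub_left,
    inner_sub_right, real_inner_smul_left, real_inner_smul_right]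
  simp only [real_inner_comm]
  field_simp
  ring

theorem vab_eq_midpoint (x a b : H) :
    vab Df κ a b = midpoint ℝ (upperParabolaGrad Df κ a x) (lowerParabolaGrad Df κ b x) := by
  rw [vab, midpoint_eq_smul_add, invOf_eq_inv, upperParabolaGrad, lowerParabolaGrad]
  module

theorem betaab_eq (x a b : H) :
    betaab Df κ a b x
      = (dist (upperParabolaGrad Df κ a x) (lowerParabolaGrad Df κ b x) / 2) ^ 2 := by
  rw [betaab, dist_eq_norm, div_pow, upperParabolaGrad, lowerParabolaGrad,
    show Df a + κ • (x - a) - (Df b - κ • (x - b))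
      = (2 : ℝ) • ((1 / 2 : ℝ) • (Df a - Df b) + (κ / 2) • ((2 : ℝ) • x - a - b)) by module,
    norm_smul, Real.norm_two]
  ring

theorem alphaab_eq (x a b : H) :
    alphaab f Df κ a b = 2 * κ * (upperParabola f Df κ a x - lowerParabola f Df κ b x)
      - dist (upperParabolaGrad Df κ a x) (lowerParabolaGrad Df κ b x) ^ 2 / 2 := by
  rw [alphaab, upperParabola, lowerParabola, fieldEval, fieldEval, dist_eq_norm,
    upperParabolaGrad, lowerParabolaGrad,
    show Df a + κ • (x - a) - (Df b - κ • (x - b)) = (Df a - Df b) + κ • ((x - a) + (x - b)) by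
      module]
  simp only [← real_inner_self_eq_norm_sq, inner_add_left, inner_add_right, inner_sub_left,
    inner_sub_right, real_inner_smul_left, real_inner_smul_right]
  simp only [real_inner_comm]
  ring

theorem norm_sub_vab_le_rab_iff {a b : H} (hα : 0 ≤ alphaab f Df κ a b) (x v : H) :
    ‖v - vab Df κ a b‖ ≤ rab f Df κ a b x ↔
      dist v (upperParabolaGrad Df κ a x) ^ 2 + dist v (lowerParabolaGrad Df κ b x) ^ 2
        ≤ 4 * κ * (upperParabola f Df κ a x - lowerParabola f Df κ b x) := by
  have hβ : 0 ≤ betaab Df κ a b x := by rw [betaab]; positivity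
  rw [rab, Real.le_sqrt (norm_nonneg _) (add_nonneg hα hβ), ← dist_eq_norm, vab_eq_midpoint x,
    alphaab_eq x, betaab_eq x,
    EuclideanGeometry.dist_sq_add_dist_sq_eq_two_mul_dist_midpoint_sq_add_half_dist_sq]
  constructor <;> intro h <;> linarith

end Paraboloids

section Lambda

variable {H : Type*} [NormedAddCommGroup H] [InnerProductSpace ℝ H]
  {f : H → ℝ} {Df : H → H} {κ : ℝ} {Ω : Set H} {x : H}

theorem Lambda_eq_iInter :
    Lambda f Df κ Ω x = ⋂ a ∈ Ω, ⋂ b ∈ Ω, Metric.closedBall (vab Df κ a b) (rab f Df κ a b x) := by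
  ext v
  simp [Lambda, dist_eq_norm]

theorem isClosed_Lambda : IsClosed (Lambda f Df κ Ω x) := by
  rw [Lambda_eq_iInter]
  exact isClosed_biInter fun a _ => isClosed_biInter fun b _ => Metric.isClosed_closedBall

theorem convex_Lambda : Convex ℝ (Lambda f Df κ Ω x) := by
  rw [Lambda_eq_iInter]
  exact convex_iInter₂ fun a _ => convex_iInter₂ fun b _ => convex_closedBall _ _

theorem isCompact_Lambda [ProperSpace H] {a : H} (ha : a ∈ Ω) :
    IsCompact (Lambda f Df κ Ω x) :=
  (isCompact_closedBall (vab Df κ a a) (rab f Df κ a a x)).of_isClosed_subset isClosed_Lambda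
    fun v hv => by simpa [dist_eq_norm] using hv a ha a ha

theorem mem_Lambda_iff (hα : ∀ a ∈ Ω, ∀ b ∈ Ω, 0 ≤ alphaab f Df κ a b) {v : H} :
    v ∈ Lambda f Df κ Ω x ↔ ∀ a ∈ Ω, ∀ b ∈ Ω,
      dist v (upperParabolaGrad Df κ a x) ^ 2 + dist v (lowerParabolaGrad Df κ b x) ^ 2
        ≤ 4 * κ * (upperParabola f Df κ a x - lowerParabola f Df κ b x) :=
  forall₂_congr fun a ha => forall₂_congr fun b hb => norm_sub_vab_le_rab_iff (hα a ha b hb) x v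

theorem Lambda_nonempty [ProperSpace H] (hα : ∀ a ∈ Ω, ∀ b ∈ Ω, 0 ≤ alphaab f Df κ a b)
    (hΩ : Ω.Nonempty) : (Lambda f Df κ Ω x).Nonempty := by
  obtain ⟨a₀, ha₀⟩ := hΩ
  let ball : Ω × Ω → Set H := fun ab =>
    Metric.closedBall (vab Df κ ab.1 ab.2) (rab f Df κ ab.1 ab.2 x)
  have hball {a b : H} (ha : a ∈ Ω) (hb : b ∈ Ω) {v : H} :
      v ∈ ball (⟨a, ha⟩, ⟨b, hb⟩) ↔
        dist v (upperParabolaGrad Df κ a x) ^ 2 + dist v (lowerParabolaGrad Df κ b x) ^ 2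
          ≤ 4 * κ * (upperParabola f Df κ a x - lowerParabola f Df κ b x) := by
    rw [Metric.mem_closedBall, dist_eq_norm]
    exact norm_sub_vab_le_rab_iff (hα a ha b hb) x v
  have hcompact : IsCompact (ball (⟨a₀, ha₀⟩, ⟨a₀, ha₀⟩)) := isCompact_closedBall _ _
  refine (hcompact.inter_iInter_nonempty ball
    (fun _ => Metric.isClosed_closedBall) fun F => ?_).mono ?_
  · -- `Option F` indexes the balls of `F` together with the ball at `(a₀, a₀)`, as `none`
    let fst : Option F → Ω := fun o => o.elim ⟨a₀, ha₀⟩ fun ab => ab.1.1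
    let snd : Option F → Ω := fun o => o.elim ⟨a₀, ha₀⟩ fun ab => ab.1.2
    obtain ⟨v, hv⟩ := exists_sq_dist_add_sq_dist_le
      (fun o => upperParabolaGrad Df κ (fst o) x) (fun o => lowerParabolaGrad Df κ (snd o) x)
      (fun o => 4 * κ * upperParabola f Df κ (fst o) x)
      (fun o => 4 * κ * lowerParabola f Df κ (snd o) x) fun i j => by
        linarith [alphaab_eq (f := f) (Df := Df) (κ := κ) x (fst i) (snd j),
          hα _ (fst i).2 _ (snd j).2]
    simp only [← mul_sub] at hv
    exact ⟨v, (hball ha₀ ha₀).2 (hv none none), mem_iInter₂.2 fun ab hab =>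
      (hball ab.1.2 ab.2.2).2 (hv (some ⟨ab, hab⟩) (some ⟨ab, hab⟩))⟩
  · rintro v ⟨-, hv⟩
    rw [Lambda_eq_iInter]
    exact mem_iInter₂.2 fun a ha => mem_iInter₂.2 fun b hb => mem_iInter.1 hv (⟨a, ha⟩, ⟨b, hb⟩)

end Lambda

section InfPsiPlus

variable {H : Type*} [NormedAddCommGroup H] [InnerProductSpace ℝ H]
  {f : H → ℝ} {Df : H → H} {κ : ℝ} {Ω : Set H} {x : H}

theorem infPsiPlus_eq_iInf (v : H) :
    infPsiPlus f Df κ Ω x v = ⨅ a : Ω, PsiPlus f Df κ x a v := by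
  rw [infPsiPlus, iInf]
  congr 1
  ext t
  simp [eq_comm]

theorem uPlus_eq_sSup_image :
    uPlus f Df κ Ω x = sSup (infPsiPlus f Df κ Ω x '' Lambda f Df κ Ω x) := by
  rw [uPlus]
  congr 1
  ext t
  simp [eq_comm]

theorem continuous_psiPlus (a : H) : Continuous (PsiPlus f Df κ x a) := by
  unfold PsiPlus
  fun_prop

theorem strongConcaveOn_psiPlus (hκ : 0 < κ) {s : Set H} (hs : Convex ℝ s) (a : H) :
    StrongConcaveOn s (1 / (2 * κ)) (PsiPlus f Df κ x a) := by
  set u := upperParabolaGrad Df κ a x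
  rw [strongConcaveOn_iff_convex]
  refine ((concaveOn_const (upperParabola f Df κ a x - ‖u‖ ^ 2 / (4 * κ)) hs).add
    (((1 / (2 * κ)) • innerₛₗ ℝ u).concaveOn hs)).congr fun v _ => ?_
  simp only [Pi.add_apply, LinearMap.smul_apply, innerₛₗ_apply_apply, smul_eq_mul]
  rw [psiPlus_eq hκ.ne', dist_eq_norm, norm_sub_sq_real, real_inner_comm]
  field_simp
  ring

theorem bddBelow_range_psiPlus (hκ : 0 < κ) (hα : ∀ a ∈ Ω, ∀ b ∈ Ω, 0 ≤ alphaab f Df κ a b)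
    {a₀ : H} (ha₀ : a₀ ∈ Ω) {v : H} (hv : v ∈ Lambda f Df κ Ω x) :
    BddBelow (range fun a : Ω => PsiPlus f Df κ x a v) := by
  refine ⟨lowerParabola f Df κ a₀ x, forall_mem_range.2 fun a => ?_⟩
  have h := (mem_Lambda_iff hα).1 hv a a.2 a₀ ha₀
  have hle : dist v (upperParabolaGrad Df κ a x) ^ 2 / (4 * κ)
      ≤ upperParabola f Df κ a x - lowerParabola f Df κ a₀ x := by
    rw [div_le_iff₀ (by positivity)]
    nlinarith [sq_nonneg (dist v (lowerParabolaGrad Df κ a₀ x))]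
  rw [psiPlus_eq hκ.ne']
  linarith

theorem upperSemicontinuousOn_infPsiPlus (hκ : 0 < κ)
    (hα : ∀ a ∈ Ω, ∀ b ∈ Ω, 0 ≤ alphaab f Df κ a b) {a₀ : H} (ha₀ : a₀ ∈ Ω) :
    UpperSemicontinuousOn (infPsiPlus f Df κ Ω x) (Lambda f Df κ Ω x) := by
  rw [funext infPsiPlus_eq_iInf]
  exact upperSemicontinuousOn_ciInf (fun v hv => bddBelow_range_psiPlus hκ hα ha₀ hv)
    fun a => (continuous_psiPlus (a : H)).upperSemicontinuous.upperSemicontinuousOn _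

theorem strictConcaveOn_infPsiPlus (hκ : 0 < κ)
    (hα : ∀ a ∈ Ω, ∀ b ∈ Ω, 0 ≤ alphaab f Df κ a b) {a₀ : H} (ha₀ : a₀ ∈ Ω) :
    StrictConcaveOn ℝ (Lambda f Df κ Ω x) (infPsiPlus f Df κ Ω x) := by
  have : Nonempty Ω := ⟨⟨a₀, ha₀⟩⟩
  rw [funext infPsiPlus_eq_iInf]
  exact (StrongConcaveOn.ciInf (fun a : Ω => strongConcaveOn_psiPlus hκ convex_Lambda (a : H))
    fun v hv => bddBelow_range_psiPlus hκ hα ha₀ hv).strictConcaveOn (by positivity)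

end InfPsiPlus

theorem stmt_8_general {n : ℕ} (Ω : Set (EuclideanSpace ℝ (Fin n)))
    (hΩne : Ω.Nonempty)
    (f : EuclideanSpace ℝ (Fin n) → ℝ)
    (Df : EuclideanSpace ℝ (Fin n) → EuclideanSpace ℝ (Fin n))
    (hTay : BddAbove (gammaVals f Df Ω))
    (hκpos : 0 < gammaOn f Df Ω)
    (x : EuclideanSpace ℝ (Fin n)) :
    ∃! v : EuclideanSpace ℝ (Fin n),
      v ∈ Lambda f Df (gammaOn f Df Ω) Ω x ∧
      infPsiPlus f Df (gammaOn f Df Ω) Ω x v = uPlus f Df (gammaOn f Df Ω) Ω x := by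
  obtain ⟨a₀, ha₀⟩ := hΩne
  have hα : ∀ a ∈ Ω, ∀ b ∈ Ω, 0 ≤ alphaab f Df (gammaOn f Df Ω) a b :=
    fun a ha b hb => alphaab_nonneg_of_bddAbove hTay hκpos ha hb
  rw [uPlus_eq_sSup_image]
  exact (strictConcaveOn_infPsiPlus hκpos hα ha₀).existsUnique_eq_sSup_image
    (Lambda_nonempty hα ⟨a₀, ha₀⟩) (isCompact_Lambda ha₀)
    (upperSemicontinuousOn_infPsiPlus hκpos hα ha₀)

/-- Let `F = (f, Df)` be a Taylorian 1-field on a nonempty `Ω ⊆ ℝⁿ` with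
`κ := Γ¹(F;Ω) > 0` and fix `x ∈ ℝⁿ`. Then the map `v ↦ inf_{a∈Ω} Ψ⁺(F,x,a,v)` attains its
supremum over `Λ_x` at a unique point `v⁺ ∈ Λ_x`. -/
theorem stmt_8 {n : ℕ} (hn : 1 ≤ n) (Ω : Set (EuclideanSpace ℝ (Fin n)))
    (hΩne : Ω.Nonempty)
    (f : EuclideanSpace ℝ (Fin n) → ℝ)
    (Df : EuclideanSpace ℝ (Fin n) → EuclideanSpace ℝ (Fin n))
    (hTay : BddAbove (gammaVals f Df Ω))
    (hκpos : 0 < gammaOn f Df Ω)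
    (x : EuclideanSpace ℝ (Fin n)) :
    ∃! v : EuclideanSpace ℝ (Fin n),
      v ∈ Lambda f Df (gammaOn f Df Ω) Ω x ∧
      infPsiPlus f Df (gammaOn f Df Ω) Ω x v = uPlus f Df (gammaOn f Df Ω) Ω x :=
  stmt_8_general Ω hΩne f Df hTay hκpos x
end
end

section
/- Let Ω ⊆ ℝⁿ be nonempty, let F be a Taylorian 1-field on Ω with κ := Γ¹(F;Ω) > 0, let x₀ ∈ ℝⁿ, set Ω₁ := Ω ∪ {x₀}, and let U be a 1-field on Ω₁ extending F (i.e. u_x = f_x and D_xu = D_xf for x ∈ Ω). Then the following are equivalent: (i) Γ¹(U;Ω₁) = Γ¹(F;Ω) (U is a minimal Lipschitz extension of F on Ω₁); (ii) for every x ∈ Ω₁, sup_{a∈Ω} Ψ⁻(F,x,a,D_xu) ≤ u_x ≤ inf_{a∈Ω} Ψ⁺(F,x,a,D_xu). -/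
noncomputable section

open scoped RealInnerProductSpace

/-
The quotient defining `Γ¹(U; x, a)` is at most `κ` for every `b` iff two quadratic functions of
`b` stay nonnegative. Completing the square in `b`, each is a constant plus `κ‖b - c‖²`, and
the constants are `Ψ⁺(F, x, a, D_xu) - u_x` and `u_x - Ψ⁻(F, x, a, D_xu)`. Hence
`Γ¹(U; x, a) ≤ κ` for `a ∈ Ω` is exactly the two-sided bound of (ii), and since the pairs in
`Ω` already realise `κ`, `Γ¹(U; Ω ∪ {x₀}) = κ` amounts to these bounds for all pairs meeting `x₀`.
-/

lemma norm_sub_sq_le_two_mul {E : Type*} [SeminormedAddCommGroup E] (x y b : E) :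
    ‖x - y‖ ^ 2 ≤ 2 * (‖x - b‖ ^ 2 + ‖y - b‖ ^ 2) := by
  have h : ‖x - y‖ ≤ ‖x - b‖ + ‖y - b‖ := by
    simpa only [norm_sub_rev b y] using norm_sub_le_norm_sub_add_norm_sub x b y
  nlinarith [norm_nonneg (x - y), two_mul_le_add_sq ‖x - b‖ ‖y - b‖]

section Taylor

variable {H : Type*} [NormedAddCommGroup H] [InnerProductSpace ℝ H]

lemma gammaPair_comm (f : H → ℝ) (Df : H → H) (x y : H) :
    gammaPair f Df x y = gammaPair f Df y x := by
  unfold gammaPair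
  congr 1 with b
  rw [abs_sub_comm, add_comm (‖x - b‖ ^ 2)]

lemma gammaPair_congr {f g : H → ℝ} {Df Dg : H → H} {x y : H}
    (hx : f x = g x ∧ Df x = Dg x) (hy : f y = g y ∧ Df y = Dg y) :
    gammaPair f Df x y = gammaPair g Dg x y := by
  simp only [gammaPair, fieldEval, hx.1, hx.2, hy.1, hy.2]

lemma two_mul_abs_inner_le (v w : H) : 2 * |⟪v, w⟫| ≤ ‖v‖ ^ 2 + ‖w‖ ^ 2 := by
  have := abs_real_inner_le_norm v w
  nlinarith [two_mul_le_add_sq ‖v‖ ‖w‖]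

lemma two_mul_abs_fieldEval_sub_le (f : H → ℝ) (Df : H → H) (x y b : H) :
    2 * |fieldEval f Df x b - fieldEval f Df y b|
      ≤ 2 * |f x - f y| + ‖Df x‖ ^ 2 + ‖Df y‖ ^ 2 + (‖x - b‖ ^ 2 + ‖y - b‖ ^ 2) := by
  have hsplit : fieldEval f Df x b - fieldEval f Df y b
      = (f x - f y) + ⟪Df x, b - x⟫ - ⟪Df y, b - y⟫ := by
    simp only [fieldEval]; ring
  have h₁ := two_mul_abs_inner_le (Df x) (b - x)
  have h₂ := two_mul_abs_inner_le (Df y) (b - y)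
  rw [norm_sub_rev] at h₁ h₂
  rw [hsplit]
  linarith [abs_sub (f x - f y + ⟪Df x, b - x⟫) ⟪Df y, b - y⟫,
    abs_add_le (f x - f y) ⟪Df x, b - x⟫]

lemma bddAbove_range_gammaPair_quotient (f : H → ℝ) (Df : H → H) {x y : H} (hxy : x ≠ y) :
    BddAbove (Set.range fun b : H =>
      2 * |fieldEval f Df x b - fieldEval f Df y b| / (‖x - b‖ ^ 2 + ‖y - b‖ ^ 2)) := by
  set C := 2 * |f x - f y| + ‖Df x‖ ^ 2 + ‖Df y‖ ^ 2
  have hm : 0 < ‖x - y‖ ^ 2 := pow_pos (norm_pos_iff.mpr (sub_ne_zero.mpr hxy)) 2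
  refine ⟨2 * C / ‖x - y‖ ^ 2 + 1, ?_⟩
  rintro _ ⟨b, rfl⟩
  have hsm := norm_sub_sq_le_two_mul x y b
  have hs : 0 < ‖x - b‖ ^ 2 + ‖y - b‖ ^ 2 := by linarith
  have hratio : 1 ≤ 2 * (‖x - b‖ ^ 2 + ‖y - b‖ ^ 2) / ‖x - y‖ ^ 2 := by
    rwa [le_div_iff₀ hm, one_mul]
  rw [div_le_iff₀ hs]
  calc 2 * |fieldEval f Df x b - fieldEval f Df y b|
      ≤ C * 1 + (‖x - b‖ ^ 2 + ‖y - b‖ ^ 2) := by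
        rw [mul_one]; exact two_mul_abs_fieldEval_sub_le f Df x y b
    _ ≤ C * (2 * (‖x - b‖ ^ 2 + ‖y - b‖ ^ 2) / ‖x - y‖ ^ 2) + (‖x - b‖ ^ 2 + ‖y - b‖ ^ 2) := by
        gcongr
    _ = (2 * C / ‖x - y‖ ^ 2 + 1) * (‖x - b‖ ^ 2 + ‖y - b‖ ^ 2) := by ring

lemma gammaPair_le_iff (f : H → ℝ) (Df : H → H) {x y : H} (hxy : x ≠ y) (κ : ℝ) :
    gammaPair f Df x y ≤ κ ↔
      ∀ b, 2 * |fieldEval f Df x b - fieldEval f Df y b| ≤ κ * (‖x - b‖ ^ 2 + ‖y - b‖ ^ 2) := by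
  have hs (b : H) : 0 < ‖x - b‖ ^ 2 + ‖y - b‖ ^ 2 := by
    linarith [norm_sub_sq_le_two_mul x y b, pow_pos (norm_pos_iff.mpr (sub_ne_zero.mpr hxy)) 2]
  have : Nonempty H := ⟨x⟩
  simp_rw [← div_le_iff₀ (hs _)]
  exact ⟨fun h b => (le_ciSup (bddAbove_range_gammaPair_quotient f Df hxy) b).trans h, ciSup_le⟩

lemma PsiMinus_eq_PsiPlus_neg (f : H → ℝ) (Df : H → H) (κ : ℝ) (x a v : H) :
    PsiMinus f Df κ x a v = PsiPlus f Df (-κ) x a v := by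
  simp only [PsiMinus, PsiPlus]
  ring

lemma PsiPlus_congr {f g : H → ℝ} {Df Dg : H → H} {a : H} (ha : f a = g a ∧ Df a = Dg a)
    (κ : ℝ) (x v : H) : PsiPlus f Df κ x a v = PsiPlus g Dg κ x a v := by
  simp only [PsiPlus, ha.1, ha.2]

lemma PsiMinus_congr {f g : H → ℝ} {Df Dg : H → H} {a : H} (ha : f a = g a ∧ Df a = Dg a)
    (κ : ℝ) (x v : H) : PsiMinus f Df κ x a v = PsiMinus g Dg κ x a v := by
  simp only [PsiMinus, ha.1, ha.2]

@[simp]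
lemma PsiPlus_self (f : H → ℝ) (Df : H → H) (κ : ℝ) (a : H) : PsiPlus f Df κ a a (Df a) = f a := by
  simp [PsiPlus]

@[simp]
lemma PsiMinus_self (f : H → ℝ) (Df : H → H) (κ : ℝ) (a : H) :
    PsiMinus f Df κ a a (Df a) = f a := by
  simp [PsiMinus]

lemma fieldEval_sub_inner_add_eq_PsiPlus {κ : ℝ} (hκ : κ ≠ 0) (f : H → ℝ) (Df : H → H)
    (x a v b : H) :
    fieldEval f Df a b - ⟪v, b - x⟫ + κ / 2 * (‖x - b‖ ^ 2 + ‖a - b‖ ^ 2)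
      = PsiPlus f Df κ x a v + κ * ‖b - ((1 / 2 : ℝ) • (x + a) - (2 * κ)⁻¹ • (Df a - v))‖ ^ 2 := by
  simp only [fieldEval, PsiPlus]
  generalize Df a = d
  simp only [← real_inner_self_eq_norm_sq, inner_sub_left, inner_sub_right,
    inner_add_left, inner_add_right, real_inner_smul_left, real_inner_smul_right]
  rw [real_inner_comm x b, real_inner_comm a b, real_inner_comm x a,
    real_inner_comm d b, real_inner_comm v b, real_inner_comm d x, real_inner_comm v x,
    real_inner_comm d a, real_inner_comm v a, real_inner_comm v d]
  field_simp
  ring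

lemma le_PsiPlus_iff {κ : ℝ} (hκ : 0 < κ) (f : H → ℝ) (Df : H → H) (x a v : H) (t : ℝ) :
    t ≤ PsiPlus f Df κ x a v ↔
      ∀ b, t + ⟪v, b - x⟫ - fieldEval f Df a b ≤ κ / 2 * (‖x - b‖ ^ 2 + ‖a - b‖ ^ 2) := by
  have hsq := fieldEval_sub_inner_add_eq_PsiPlus hκ.ne' f Df x a v
  constructor
  · intro ht b
    have : 0 ≤ κ * ‖b - ((1 / 2 : ℝ) • (x + a) - (2 * κ)⁻¹ • (Df a - v))‖ ^ 2 := by positivity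
    linarith [hsq b]
  · intro h
    have hmin := hsq ((1 / 2 : ℝ) • (x + a) - (2 * κ)⁻¹ • (Df a - v))
    rw [sub_self, norm_zero] at hmin
    linarith [h ((1 / 2 : ℝ) • (x + a) - (2 * κ)⁻¹ • (Df a - v))]

lemma PsiMinus_le_iff {κ : ℝ} (hκ : 0 < κ) (f : H → ℝ) (Df : H → H) (x a v : H) (t : ℝ) :
    PsiMinus f Df κ x a v ≤ t ↔
      ∀ b, fieldEval f Df a b - (t + ⟪v, b - x⟫) ≤ κ / 2 * (‖x - b‖ ^ 2 + ‖a - b‖ ^ 2) := by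
  have hsq := fieldEval_sub_inner_add_eq_PsiPlus (neg_ne_zero.mpr hκ.ne') f Df x a v
  rw [PsiMinus_eq_PsiPlus_neg]
  constructor
  · intro ht b
    have : 0 ≤ κ * ‖b - ((1 / 2 : ℝ) • (x + a) - (2 * -κ)⁻¹ • (Df a - v))‖ ^ 2 := by positivity
    linarith [hsq b]
  · intro h
    have hmin := hsq ((1 / 2 : ℝ) • (x + a) - (2 * -κ)⁻¹ • (Df a - v))
    rw [sub_self, norm_zero] at hmin
    linarith [h ((1 / 2 : ℝ) • (x + a) - (2 * -κ)⁻¹ • (Df a - v))]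

lemma gammaPair_le_iff_PsiMinus_le_and_le_PsiPlus {κ : ℝ} (hκ : 0 < κ) (f : H → ℝ)
    (Df : H → H) {x a : H} (hxa : x ≠ a) :
    gammaPair f Df x a ≤ κ ↔
      PsiMinus f Df κ x a (Df x) ≤ f x ∧ f x ≤ PsiPlus f Df κ x a (Df x) := by
  rw [gammaPair_le_iff f Df hxa, PsiMinus_le_iff hκ, le_PsiPlus_iff hκ, ← forall_and]
  refine forall_congr' fun b => ?_
  rw [← le_div_iff₀' two_pos, abs_le, neg_le, neg_sub, mul_div_right_comm]
  rfl

lemma mem_upperBounds_gammaVals_iff {f : H → ℝ} {Df : H → H} {S : Set H} {κ : ℝ} :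
    κ ∈ upperBounds (gammaVals f Df S) ↔ ∀ x ∈ S, ∀ y ∈ S, x ≠ y → gammaPair f Df x y ≤ κ :=
  ⟨fun h x hx y hy hxy => h ⟨x, hx, y, hy, hxy, rfl⟩,
    by rintro h _ ⟨x, hx, y, hy, hxy, rfl⟩; exact h x hx y hy hxy⟩

lemma bddAbove_gammaVals_of_gammaOn_pos {f : H → ℝ} {Df : H → H} {S : Set H}
    (h : 0 < gammaOn f Df S) : BddAbove (gammaVals f Df S) := by
  by_contra hb
  rw [gammaOn, Real.sSup_of_not_bddAbove hb] at h
  exact h.false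

lemma gammaVals_nonempty_of_gammaOn_pos {f : H → ℝ} {Df : H → H} {S : Set H}
    (h : 0 < gammaOn f Df S) : (gammaVals f Df S).Nonempty := by
  rw [Set.nonempty_iff_ne_empty]
  intro he
  rw [gammaOn, he, Real.sSup_empty] at h
  exact h.false

lemma gammaVals_subset_of_extends {f g : H → ℝ} {Df Dg : H → H} {S T : Set H}
    (hext : ∀ x ∈ S, g x = f x ∧ Dg x = Df x) (hST : S ⊆ T) :
    gammaVals f Df S ⊆ gammaVals g Dg T := by
  rintro _ ⟨x, hx, y, hy, hxy, rfl⟩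
  exact ⟨x, hST hx, y, hST hy, hxy, (gammaPair_congr (hext x hx) (hext y hy)).symm⟩

end Taylor

theorem stmt_9_general {n : ℕ} (Ω : Set (EuclideanSpace ℝ (Fin n)))
    (f : EuclideanSpace ℝ (Fin n) → ℝ)
    (Df : EuclideanSpace ℝ (Fin n) → EuclideanSpace ℝ (Fin n))
    (hκpos : 0 < gammaOn f Df Ω)
    (x₀ : EuclideanSpace ℝ (Fin n))
    (u : EuclideanSpace ℝ (Fin n) → ℝ)
    (Du : EuclideanSpace ℝ (Fin n) → EuclideanSpace ℝ (Fin n))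
    (hext : ∀ x ∈ Ω, u x = f x ∧ Du x = Df x) :
    gammaOn u Du (Ω ∪ {x₀}) = gammaOn f Df Ω ↔
      ∀ x ∈ Ω ∪ {x₀}, ∀ a ∈ Ω,
        PsiMinus f Df (gammaOn f Df Ω) x a (Du x) ≤ u x ∧
        u x ≤ PsiPlus f Df (gammaOn f Df Ω) x a (Du x) := by
  set κ := gammaOn f Df Ω
  have hpair : ∀ x, ∀ a ∈ Ω, x ≠ a → (gammaPair u Du x a ≤ κ ↔
      PsiMinus f Df κ x a (Du x) ≤ u x ∧ u x ≤ PsiPlus f Df κ x a (Du x)) := by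
    intro x a ha hxa
    rw [← PsiMinus_congr (hext a ha), ← PsiPlus_congr (hext a ha)]
    exact gammaPair_le_iff_PsiMinus_le_and_le_PsiPlus hκpos u Du hxa
  constructor
  · intro hU x hx a ha
    obtain rfl | hxa := eq_or_ne x a
    · simp [hext x ha]
    · have hbdd := bddAbove_gammaVals_of_gammaOn_pos (hU ▸ hκpos)
      exact (hpair x a ha hxa).1 (hU ▸ le_csSup hbdd ⟨x, hx, a, Or.inl ha, hxa, rfl⟩)
  · intro hΨ
    have hub : κ ∈ upperBounds (gammaVals u Du (Ω ∪ {x₀})) := by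
      refine mem_upperBounds_gammaVals_iff.2 ?_
      rintro x hx y (hy | rfl) hxy
      · exact (hpair x y hy hxy).2 (hΨ x hx y hy)
      · have hxΩ : x ∈ Ω := hx.resolve_right hxy
        rw [gammaPair_comm]
        exact (hpair _ x hxΩ hxy.symm).2 (hΨ _ (Or.inr rfl) x hxΩ)
    exact le_antisymm (Real.sSup_le hub hκpos.le) <| csSup_le_csSup ⟨κ, hub⟩
      (gammaVals_nonempty_of_gammaOn_pos hκpos)
      (gammaVals_subset_of_extends hext Set.subset_union_left)

/-- Let `F = (f, Df)` be a Taylorian 1-field on a nonempty `Ω ⊆ ℝⁿ` with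
`κ := Γ¹(F;Ω) > 0`, let `x₀ ∈ ℝⁿ`, `Ω₁ := Ω ∪ {x₀}`, and let `U = (u, Du)` be a 1-field on
`Ω₁` extending `F`. Then `U` is an MLE of `F` on `Ω₁` iff
`sup_{a∈Ω} Ψ⁻(F,x,a,D_xu) ≤ u_x ≤ inf_{a∈Ω} Ψ⁺(F,x,a,D_xu)` for all `x ∈ Ω₁`
(the sup/inf condition being stated pointwise in `a`). -/
theorem stmt_9 {n : ℕ} (hn : 1 ≤ n) (Ω : Set (EuclideanSpace ℝ (Fin n)))
    (hΩne : Ω.Nonempty)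
    (f : EuclideanSpace ℝ (Fin n) → ℝ)
    (Df : EuclideanSpace ℝ (Fin n) → EuclideanSpace ℝ (Fin n))
    (hTay : BddAbove (gammaVals f Df Ω))
    (hκpos : 0 < gammaOn f Df Ω)
    (x₀ : EuclideanSpace ℝ (Fin n))
    (u : EuclideanSpace ℝ (Fin n) → ℝ)
    (Du : EuclideanSpace ℝ (Fin n) → EuclideanSpace ℝ (Fin n))
    (hext : ∀ x ∈ Ω, u x = f x ∧ Du x = Df x) :
    gammaOn u Du (Ω ∪ {x₀}) = gammaOn f Df Ω ↔
      ∀ x ∈ Ω ∪ {x₀}, ∀ a ∈ Ω,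
        PsiMinus f Df (gammaOn f Df Ω) x a (Du x) ≤ u x ∧
        u x ≤ PsiPlus f Df (gammaOn f Df Ω) x a (Du x) :=
  stmt_9_general Ω f Df hκpos x₀ u Du hext
end
end

section
/- Let Ω ⊆ ℝⁿ be nonempty and let F be a Taylorian 1-field on Ω with κ := Γ¹(F;Ω) > 0. Then for every x ∈ ℝⁿ and every v ∈ ℝⁿ: sup_{a∈Ω} Ψ⁻(F,x,a,v) ≤ inf_{a∈Ω} Ψ⁺(F,x,a,v) if and only if v ∈ Λ_x. -/
noncomputable section

open scoped RealInnerProductSpace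

section Aux

variable {H : Type*} [NormedAddCommGroup H] [InnerProductSpace ℝ H]

lemma key_identity (f : H → ℝ) (Df : H → H) (κ : ℝ) (hκ : κ ≠ 0) (x a b v : H) :
    2 * κ * (PsiPlus f Df κ x a v - PsiMinus f Df κ x b v)
      = alphaab f Df κ a b + betaab Df κ a b x - ‖v - vab Df κ a b‖ ^ 2 := by
  simp only [PsiPlus, PsiMinus, alphaab, betaab, vab, ← real_inner_self_eq_norm_sq,
    inner_sub_left, inner_sub_right, inner_add_left, inner_add_right,
    real_inner_smul_left, real_inner_smul_right, real_inner_comm]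
  field_simp
  ring

lemma alpha_eq (f : H → ℝ) (Df : H → H) (κ : ℝ) (hκ : κ ≠ 0) (a b : H) :
    alphaab f Df κ a b =
      κ * (κ * (‖a - ((1/2:ℝ) • (a + b) + (1/(2*κ)) • (Df b - Df a))‖ ^ 2
              + ‖b - ((1/2:ℝ) • (a + b) + (1/(2*κ)) • (Df b - Df a))‖ ^ 2)
        - 2 * (fieldEval f Df b ((1/2:ℝ) • (a + b) + (1/(2*κ)) • (Df b - Df a))
             - fieldEval f Df a ((1/2:ℝ) • (a + b) + (1/(2*κ)) • (Df b - Df a)))) := by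
  simp only [alphaab, fieldEval, ← real_inner_self_eq_norm_sq,
    inner_sub_left, inner_sub_right, inner_add_left, inner_add_right,
    real_inner_smul_left, real_inner_smul_right, real_inner_comm]
  field_simp
  ring

lemma quot_bdd (f : H → ℝ) (Df : H → H) (a b : H) (hab : a ≠ b) :
    BddAbove (Set.range fun c : H =>
      2 * |fieldEval f Df a c - fieldEval f Df b c| / (‖a - c‖ ^ 2 + ‖b - c‖ ^ 2)) := by
  set P : ℝ := |f a - f b + ⟪Df b, b - a⟫| with hP
  set q : H := Df a - Df b with hq
  set d : ℝ := ‖a - b‖ ^ 2 / 2 with hd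
  have hd0 : 0 < d := by
    have h0 : 0 < ‖a - b‖ := norm_pos_iff.mpr (sub_ne_zero.mpr hab)
    rw [hd]; positivity
  refine ⟨(2 * P + ‖q‖ ^ 2) / d + 1, ?_⟩
  rintro t ⟨c, rfl⟩
  have hden : 0 < ‖a - c‖ ^ 2 + ‖b - c‖ ^ 2 := by
    have h1 : ‖a - b‖ ≤ ‖a - c‖ + ‖b - c‖ := by
      have := norm_sub_le_norm_sub_add_norm_sub a c b
      simpa [norm_sub_rev c b] using norm_sub_le_norm_sub_add_norm_sub a c b
    have h2 : 0 < ‖a - b‖ := by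
      have : a - b ≠ 0 := sub_ne_zero.mpr hab
      simpa using norm_pos_iff.mpr this
    have h3 : ‖a - b‖ * ‖a - b‖ ≤ (‖a - c‖ + ‖b - c‖) * (‖a - c‖ + ‖b - c‖) :=
      mul_le_mul h1 h1 (norm_nonneg _) (by positivity)
    nlinarith [h3, h2, sq_nonneg (‖a - c‖ - ‖b - c‖)]
  have hdle : d ≤ ‖a - c‖ ^ 2 + ‖b - c‖ ^ 2 := by
    have h1 : ‖a - b‖ ≤ ‖a - c‖ + ‖b - c‖ := by
      simpa [norm_sub_rev c b] using norm_sub_le_norm_sub_add_norm_sub a c b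
    have h2 : 0 ≤ ‖a - b‖ := norm_nonneg _
    have h3 : ‖a - b‖ * ‖a - b‖ ≤ (‖a - c‖ + ‖b - c‖) * (‖a - c‖ + ‖b - c‖) :=
      mul_le_mul h1 h1 (norm_nonneg _) (by positivity)
    rw [hd]
    nlinarith [h3, sq_nonneg (‖a - c‖ - ‖b - c‖)]
  have hNdec : fieldEval f Df a c - fieldEval f Df b c
      = (f a - f b + ⟪Df b, b - a⟫) + ⟪q, c - a⟫ := by
    simp only [fieldEval, hq, inner_sub_left, inner_sub_right]
    ring
  have hNb : |fieldEval f Df a c - fieldEval f Df b c| ≤ P + ‖q‖ * ‖c - a‖ := by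
    rw [hNdec]
    calc |(f a - f b + ⟪Df b, b - a⟫) + ⟪q, c - a⟫|
        ≤ |f a - f b + ⟪Df b, b - a⟫| + |⟪q, c - a⟫| := abs_add_le _ _
      _ ≤ P + ‖q‖ * ‖c - a‖ := by
          gcongr
          exact abs_real_inner_le_norm q (c - a)
  have hnum : 2 * |fieldEval f Df a c - fieldEval f Df b c|
      ≤ (2 * P + ‖q‖ ^ 2) + ‖c - a‖ ^ 2 := by
    nlinarith [sq_nonneg (‖q‖ - ‖c - a‖)]
  have hP0 : 0 ≤ 2 * P + ‖q‖ ^ 2 := by positivity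
  calc 2 * |fieldEval f Df a c - fieldEval f Df b c| / (‖a - c‖ ^ 2 + ‖b - c‖ ^ 2)
      ≤ ((2 * P + ‖q‖ ^ 2) + ‖c - a‖ ^ 2) / (‖a - c‖ ^ 2 + ‖b - c‖ ^ 2) := by
        gcongr
    _ ≤ (2 * P + ‖q‖ ^ 2) / d + 1 := by
        rw [add_div]
        have hx1 : (2 * P + ‖q‖ ^ 2) / (‖a - c‖ ^ 2 + ‖b - c‖ ^ 2)
            ≤ (2 * P + ‖q‖ ^ 2) / d := by gcongr
        have hx2 : ‖c - a‖ ^ 2 / (‖a - c‖ ^ 2 + ‖b - c‖ ^ 2) ≤ 1 := by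
          rw [div_le_one hden, norm_sub_rev c a]
          linarith [sq_nonneg ‖b - c‖]
        linarith

end Aux

/-- Let `F = (f, Df)` be a Taylorian 1-field on a nonempty `Ω ⊆ ℝⁿ` with
`κ := Γ¹(F;Ω) > 0`. Then for every `x, v ∈ ℝⁿ`,
`sup_{a∈Ω} Ψ⁻(F,x,a,v) ≤ inf_{a∈Ω} Ψ⁺(F,x,a,v)` (stated pointwise: `Ψ⁻(F,x,b,v) ≤
Ψ⁺(F,x,a,v)` for all `a, b ∈ Ω`) if and only if `v ∈ Λ_x`. -/
theorem stmt_10 {n : ℕ} (hn : 1 ≤ n) (Ω : Set (EuclideanSpace ℝ (Fin n)))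
    (hΩne : Ω.Nonempty)
    (f : EuclideanSpace ℝ (Fin n) → ℝ)
    (Df : EuclideanSpace ℝ (Fin n) → EuclideanSpace ℝ (Fin n))
    (hTay : BddAbove (gammaVals f Df Ω))
    (hκpos : 0 < gammaOn f Df Ω) :
    ∀ x v : EuclideanSpace ℝ (Fin n),
      (∀ a ∈ Ω, ∀ b ∈ Ω,
          PsiMinus f Df (gammaOn f Df Ω) x b v ≤ PsiPlus f Df (gammaOn f Df Ω) x a v) ↔
        v ∈ Lambda f Df (gammaOn f Df Ω) Ω x := by
  intro x v
  set κ := gammaOn f Df Ω with hκdef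
  have hκ : κ ≠ 0 := ne_of_gt hκpos
  -- pointwise Γ bound and α ≥ 0
  have halpha : ∀ a ∈ Ω, ∀ b ∈ Ω, 0 ≤ alphaab f Df κ a b := by
    intro a ha b hb
    rcases eq_or_ne a b with rfl | hab
    · simp [alphaab]
    · obtain ⟨c, hc⟩ : ∃ c : EuclideanSpace ℝ (Fin n),
          c = (1/2:ℝ) • (a + b) + (1/(2*κ)) • (Df b - Df a) := ⟨_, rfl⟩
      have hquot : 2 * |fieldEval f Df a c - fieldEval f Df b c|
          / (‖a - c‖ ^ 2 + ‖b - c‖ ^ 2) ≤ κ := by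
        have h1 : 2 * |fieldEval f Df a c - fieldEval f Df b c|
            / (‖a - c‖ ^ 2 + ‖b - c‖ ^ 2) ≤ gammaPair f Df a b :=
          le_ciSup (quot_bdd f Df a b hab) c
        have h2 : gammaPair f Df a b ≤ κ :=
          le_csSup hTay ⟨a, ha, b, hb, hab, rfl⟩
        exact h1.trans h2
      have hden : 0 < ‖a - c‖ ^ 2 + ‖b - c‖ ^ 2 := by
        rcases eq_or_ne a c with rfl | hac
        · rcases eq_or_ne a b with rfl | h
          · exact absurd rfl hab
          · have h0 : 0 < ‖b - a‖ := norm_pos_iff.mpr (sub_ne_zero.mpr h.symm)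
            positivity
        · have h0 : 0 < ‖a - c‖ := norm_pos_iff.mpr (sub_ne_zero.mpr hac)
          positivity
      have hineq : 2 * |fieldEval f Df a c - fieldEval f Df b c|
          ≤ κ * (‖a - c‖ ^ 2 + ‖b - c‖ ^ 2) := by
        rw [div_le_iff₀ hden] at hquot
        linarith [hquot]
      have hptwise : 2 * (fieldEval f Df b c - fieldEval f Df a c)
          ≤ κ * (‖a - c‖ ^ 2 + ‖b - c‖ ^ 2) := by
        have : fieldEval f Df b c - fieldEval f Df a c
            ≤ |fieldEval f Df a c - fieldEval f Df b c| := by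
          rw [abs_sub_comm]
          exact le_abs_self _
        linarith
      rw [alpha_eq f Df κ hκ a b, ← hc]
      have : 0 ≤ κ * (‖a - c‖ ^ 2 + ‖b - c‖ ^ 2)
          - 2 * (fieldEval f Df b c - fieldEval f Df a c) := by linarith
      positivity
  constructor
  · intro h a ha b hb
    have hpsi := h a ha b hb
    have hid := key_identity f Df κ hκ x a b v
    have hsq : ‖v - vab Df κ a b‖ ^ 2 ≤ alphaab f Df κ a b + betaab Df κ a b x := by
      nlinarith [hid, hpsi, hκpos]
    have : ‖v - vab Df κ a b‖ = Real.sqrt (‖v - vab Df κ a b‖ ^ 2) :=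
      (Real.sqrt_sq (norm_nonneg _)).symm
    rw [rab, this]
    exact Real.sqrt_le_sqrt hsq
  · intro h a ha b hb
    have hr := h a ha b hb
    have hnn : 0 ≤ alphaab f Df κ a b + betaab Df κ a b x := by
      have := halpha a ha b hb
      have hb2 : 0 ≤ betaab Df κ a b x := by rw [betaab]; positivity
      linarith
    rw [rab] at hr
    have hsq : ‖v - vab Df κ a b‖ ^ 2 ≤ alphaab f Df κ a b + betaab Df κ a b x := by
      have h1 := Real.sq_sqrt hnn
      have h2 := mul_self_le_mul_self (norm_nonneg (v - vab Df κ a b)) hr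
      nlinarith [h1, h2]
    have hid := key_identity f Df κ hκ x a b v
    nlinarith [hid, hκpos]
end
end

section
/- Let Ω ⊆ ℝⁿ be nonempty, let F be a Taylorian 1-field on Ω with κ := Γ¹(F;Ω) > 0, and let u⁺(x) := max_{v∈Λ_x} inf_{a∈Ω} Ψ⁺(F,x,a,v), u⁻(x) := min_{v∈Λ_x} sup_{a∈Ω} Ψ⁻(F,x,a,v). Then every minimal Lipschitz extension G of F on ℝⁿ satisfies u⁻(x) ≤ g_x ≤ u⁺(x) for all x ∈ ℝⁿ. -/
noncomputable section

open scoped RealInnerProductSpace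

/-!
Taking `κ = Γ¹(F;Ω)`, a minimal Lipschitz extension `G` satisfies
`2 |G(x)(t) - G(a)(t)| ≤ κ (‖x - t‖² + ‖a - t‖²)` for all `x, a, t`. For `a ∈ Ω` we have
`G(a) = F(a)`, and evaluating at the optimal `t` turns this into
`Ψ⁻(F,x,a,D_xg) ≤ g_x ≤ Ψ⁺(F,x,a,D_xg)`. Since `2κ (Ψ⁺(F,x,a,v) - Ψ⁻(F,x,b,v))` equals
`α_{a,b} + β_{a,b}(x) - ‖v - v_{a,b}‖²`, the gradient `D_xg` lies in `Λ_x`, and hence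
`u⁻(x) ≤ sup_a Ψ⁻(F,x,a,D_xg) ≤ g_x ≤ inf_a Ψ⁺(F,x,a,D_xg) ≤ u⁺(x)`.
-/

open Set

lemma half_norm_sub_sq_le_add {E : Type*} [SeminormedAddCommGroup E] (x y t : E) :
    ‖x - y‖ ^ 2 / 2 ≤ ‖x - t‖ ^ 2 + ‖y - t‖ ^ 2 := by
  have h := norm_sub_le_norm_sub_add_norm_sub x t y
  rw [norm_sub_rev t y] at h
  nlinarith [sq_nonneg (‖x - t‖ - ‖y - t‖), norm_nonneg (x - y)]

variable {H : Type*} [NormedAddCommGroup H] [InnerProductSpace ℝ H]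

section Gamma

variable (g : H → ℝ) (Dg : H → H)

lemma bddAbove_gammaPair_quotients {x y : H} (hxy : x ≠ y) :
    BddAbove (range fun a : H =>
      2 * |fieldEval g Dg x a - fieldEval g Dg y a| / (‖x - a‖ ^ 2 + ‖y - a‖ ^ 2)) := by
  set d := ‖x - y‖ ^ 2 / 2
  have hd : 0 < d := by have := norm_sub_pos_iff.mpr hxy; positivity
  set c := |g x - fieldEval g Dg y x|
  set w := ‖Dg x - Dg y‖
  refine ⟨2 * ((c + w) / d + w), ?_⟩
  rintro _ ⟨a, rfl⟩
  set D := ‖x - a‖ ^ 2 + ‖y - a‖ ^ 2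
  have hdD : d ≤ D := half_norm_sub_sq_le_add x y a
  have hnum : |fieldEval g Dg x a - fieldEval g Dg y a| ≤ c + w * ‖x - a‖ := by
    have hsplit : fieldEval g Dg x a - fieldEval g Dg y a
        = (g x - fieldEval g Dg y x) + ⟪Dg x - Dg y, a - x⟫ := by
      simp only [fieldEval, inner_sub_left, inner_sub_right]
      ring
    rw [hsplit, norm_sub_rev x a]
    exact (abs_add_le _ _).trans (add_le_add_right (abs_real_inner_le_norm _ _) c)
  have hD_div : 1 ≤ D / d := (one_le_div hd).mpr hdD
  have hxa : ‖x - a‖ ≤ D / d + D := by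
    nlinarith [sq_nonneg (‖x - a‖ - 1), sq_nonneg ‖y - a‖]
  rw [div_le_iff₀ (hd.trans_le hdD)]
  calc 2 * |fieldEval g Dg x a - fieldEval g Dg y a|
      ≤ 2 * (c * (D / d) + w * (D / d + D)) := by
        gcongr
        exact hnum.trans (add_le_add (le_mul_of_one_le_right (abs_nonneg _) hD_div)
          (mul_le_mul_of_nonneg_left hxa (norm_nonneg _)))
    _ = 2 * ((c + w) / d + w) * D := by ring

lemma two_mul_abs_fieldEval_sub_le_of_gammaPair_le {κ : ℝ} {x y : H} (hxy : x ≠ y)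
    (h : gammaPair g Dg x y ≤ κ) (t : H) :
    2 * |fieldEval g Dg x t - fieldEval g Dg y t| ≤ κ * (‖x - t‖ ^ 2 + ‖y - t‖ ^ 2) := by
  have hD : 0 < ‖x - t‖ ^ 2 + ‖y - t‖ ^ 2 := by
    have := norm_sub_pos_iff.mpr hxy
    exact (by positivity : 0 < ‖x - y‖ ^ 2 / 2).trans_le (half_norm_sub_sq_le_add x y t)
  rw [← div_le_iff₀ hD]
  exact (le_ciSup (bddAbove_gammaPair_quotients g Dg hxy) t).trans h

-- `sSup` of a set that is not bounded above is `0`, which positivity rules out.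
variable {g Dg} in
lemma gammaPair_le_gammaOn {S : Set H} (hS : 0 < gammaOn g Dg S) {x y : H} (hx : x ∈ S)
    (hy : y ∈ S) (hxy : x ≠ y) : gammaPair g Dg x y ≤ gammaOn g Dg S := by
  have hbdd : BddAbove (gammaVals g Dg S) := by
    by_contra h
    rw [gammaOn, Real.sSup_of_not_bddAbove h] at hS
    exact hS.false
  exact le_csSup hbdd ⟨x, hx, y, hy, hxy, rfl⟩

variable {g Dg} in
lemma two_mul_abs_fieldEval_sub_le_gammaOn_univ (hG : 0 < gammaOn g Dg univ) (x y t : H) :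
    2 * |fieldEval g Dg x t - fieldEval g Dg y t|
      ≤ gammaOn g Dg univ * (‖x - t‖ ^ 2 + ‖y - t‖ ^ 2) := by
  rcases eq_or_ne x y with rfl | hxy
  · simp only [sub_self, abs_zero, mul_zero]
    positivity
  · exact two_mul_abs_fieldEval_sub_le_of_gammaPair_le g Dg hxy
      (gammaPair_le_gammaOn hG (mem_univ x) (mem_univ y) hxy) t

end Gamma

section Psi

variable (f : H → ℝ) (Df : H → H) {κ : ℝ}

-- `t` minimizes `κ (‖x - t‖² + ‖y - t‖²) - 2 (G(x)(t) - F(y)(t))`, with minimum `2 (Ψ⁺ - g_x)`.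
lemma le_PsiPlus_of_forall_le (g : H → ℝ) (Dg : H → H) (hκ : κ ≠ 0) {x y : H}
    (h : ∀ t, 2 * (fieldEval g Dg x t - fieldEval f Df y t) ≤ κ * (‖x - t‖ ^ 2 + ‖y - t‖ ^ 2)) :
    g x ≤ PsiPlus f Df κ x y (Dg x) := by
  set t : H := (1 / 2 : ℝ) • (x + y) + (1 / (2 * κ)) • (Dg x - Df y)
  have key : κ * (‖x - t‖ ^ 2 + ‖y - t‖ ^ 2) - 2 * (fieldEval g Dg x t - fieldEval f Df y t)
      = 2 * (PsiPlus f Df κ x y (Dg x) - g x) := by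
    simp only [t, fieldEval, PsiPlus, ← real_inner_self_eq_norm_sq, inner_sub_left,
      inner_sub_right, inner_add_left, inner_add_right, real_inner_smul_right, real_inner_comm]
    field_simp
    ring
  linarith [h t]

lemma PsiMinus_le_of_forall_le (g : H → ℝ) (Dg : H → H) (hκ : κ ≠ 0) {x y : H}
    (h : ∀ t, 2 * (fieldEval f Df y t - fieldEval g Dg x t) ≤ κ * (‖x - t‖ ^ 2 + ‖y - t‖ ^ 2)) :
    PsiMinus f Df κ x y (Dg x) ≤ g x := by
  set t : H := (1 / 2 : ℝ) • (x + y) - (1 / (2 * κ)) • (Dg x - Df y)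
  have key : κ * (‖x - t‖ ^ 2 + ‖y - t‖ ^ 2) - 2 * (fieldEval f Df y t - fieldEval g Dg x t)
      = 2 * (g x - PsiMinus f Df κ x y (Dg x)) := by
    simp only [t, fieldEval, PsiMinus, ← real_inner_self_eq_norm_sq, inner_sub_left,
      inner_sub_right, inner_add_left, inner_add_right, real_inner_smul_right, real_inner_comm]
    field_simp
    ring
  linarith [h t]

lemma two_mul_mul_PsiPlus_sub_PsiMinus (hκ : κ ≠ 0) (x a b v : H) :
    2 * κ * (PsiPlus f Df κ x a v - PsiMinus f Df κ x b v)
      = alphaab f Df κ a b + betaab Df κ a b x - ‖v - vab Df κ a b‖ ^ 2 := by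
  simp only [PsiPlus, PsiMinus, alphaab, betaab, vab, ← real_inner_self_eq_norm_sq,
    inner_sub_left, inner_sub_right, inner_add_left, inner_add_right,
    real_inner_smul_right, real_inner_comm]
  field_simp
  ring

lemma mem_Lambda_of_PsiMinus_le_PsiPlus (hκ : 0 < κ) {Ω : Set H} {x v : H}
    (h : ∀ a ∈ Ω, ∀ b ∈ Ω, PsiMinus f Df κ x b v ≤ PsiPlus f Df κ x a v) :
    v ∈ Lambda f Df κ Ω x := by
  intro a ha b hb
  have hid := two_mul_mul_PsiPlus_sub_PsiMinus f Df hκ.ne' x a b v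
  have hpos : 0 ≤ 2 * κ * (PsiPlus f Df κ x a v - PsiMinus f Df κ x b v) :=
    mul_nonneg (by positivity) (sub_nonneg.mpr (h a ha b hb))
  exact Real.le_sqrt_of_sq_le (by linarith)

lemma PsiPlus_eq (hκ : κ ≠ 0) (x a v : H) :
    PsiPlus f Df κ x a v = fieldEval f Df a x + κ / 2 * ‖x - a‖ ^ 2
      - 1 / (4 * κ) * ‖v - Df a - κ • (x - a)‖ ^ 2 := by
  simp only [PsiPlus, fieldEval, ← real_inner_self_eq_norm_sq, inner_sub_left,
    inner_sub_right, inner_add_left, real_inner_smul_right, real_inner_comm]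
  field_simp
  ring

lemma PsiMinus_eq (hκ : κ ≠ 0) (x a v : H) :
    PsiMinus f Df κ x a v = fieldEval f Df a x - κ / 2 * ‖x - a‖ ^ 2
      + 1 / (4 * κ) * ‖v - Df a + κ • (x - a)‖ ^ 2 := by
  simp only [PsiMinus, fieldEval, ← real_inner_self_eq_norm_sq, inner_sub_left,
    inner_sub_right, inner_add_left, inner_add_right, real_inner_smul_right, real_inner_comm]
  field_simp
  ring

lemma PsiPlus_le (hκ : 0 < κ) (x a v : H) :
    PsiPlus f Df κ x a v ≤ fieldEval f Df a x + κ / 2 * ‖x - a‖ ^ 2 := by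
  rw [PsiPlus_eq f Df hκ.ne']
  have : 0 ≤ 1 / (4 * κ) * ‖v - Df a - κ • (x - a)‖ ^ 2 := by positivity
  linarith

lemma le_PsiMinus (hκ : 0 < κ) (x a v : H) :
    fieldEval f Df a x - κ / 2 * ‖x - a‖ ^ 2 ≤ PsiMinus f Df κ x a v := by
  rw [PsiMinus_eq f Df hκ.ne']
  have : 0 ≤ 1 / (4 * κ) * ‖v - Df a + κ • (x - a)‖ ^ 2 := by positivity
  linarith

variable {Ω : Set H}

-- The `max 0` covers the junk value `0` of `sInf` on a set that is not bounded below.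
lemma bddAbove_range_infPsiPlus (hκ : 0 < κ) {a : H} (ha : a ∈ Ω) (x : H) :
    BddAbove (range (infPsiPlus f Df κ Ω x)) := by
  refine ⟨max 0 (fieldEval f Df a x + κ / 2 * ‖x - a‖ ^ 2), ?_⟩
  rintro _ ⟨v, rfl⟩
  by_cases hb : BddBelow {t | ∃ a ∈ Ω, t = PsiPlus f Df κ x a v}
  · exact ((csInf_le hb ⟨a, ha, rfl⟩).trans (PsiPlus_le f Df hκ x a v)).trans (le_max_right _ _)
  · rw [infPsiPlus, Real.sInf_of_not_bddBelow hb]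
    exact le_max_left _ _

lemma bddBelow_range_supPsiMinus (hκ : 0 < κ) {a : H} (ha : a ∈ Ω) (x : H) :
    BddBelow (range (supPsiMinus f Df κ Ω x)) := by
  refine ⟨min 0 (fieldEval f Df a x - κ / 2 * ‖x - a‖ ^ 2), ?_⟩
  rintro _ ⟨v, rfl⟩
  by_cases hb : BddAbove {t | ∃ a ∈ Ω, t = PsiMinus f Df κ x a v}
  · exact (min_le_right _ _).trans ((le_PsiMinus f Df hκ x a v).trans (le_csSup hb ⟨a, ha, rfl⟩))
  · rw [supPsiMinus, Real.sSup_of_not_bddAbove hb]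
    exact min_le_left _ _

lemma infPsiPlus_le_uPlus (hκ : 0 < κ) (hΩ : Ω.Nonempty) {x v : H}
    (hv : v ∈ Lambda f Df κ Ω x) : infPsiPlus f Df κ Ω x v ≤ uPlus f Df κ Ω x := by
  obtain ⟨a, ha⟩ := hΩ
  refine le_csSup ((bddAbove_range_infPsiPlus f Df hκ ha x).mono ?_) ⟨v, hv, rfl⟩
  rintro _ ⟨w, -, rfl⟩
  exact ⟨w, rfl⟩

lemma uMinus_le_supPsiMinus (hκ : 0 < κ) (hΩ : Ω.Nonempty) {x v : H}
    (hv : v ∈ Lambda f Df κ Ω x) : uMinus f Df κ Ω x ≤ supPsiMinus f Df κ Ω x v := by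
  obtain ⟨a, ha⟩ := hΩ
  refine csInf_le ((bddBelow_range_supPsiMinus f Df hκ ha x).mono ?_) ⟨v, hv, rfl⟩
  rintro _ ⟨w, -, rfl⟩
  exact ⟨w, rfl⟩

end Psi

theorem stmt_14_general {n : ℕ} (Ω : Set (EuclideanSpace ℝ (Fin n)))
    (hΩne : Ω.Nonempty)
    (f : EuclideanSpace ℝ (Fin n) → ℝ)
    (Df : EuclideanSpace ℝ (Fin n) → EuclideanSpace ℝ (Fin n))
    (hκpos : 0 < gammaOn f Df Ω) :
    ∀ (g : EuclideanSpace ℝ (Fin n) → ℝ)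
      (Dg : EuclideanSpace ℝ (Fin n) → EuclideanSpace ℝ (Fin n)),
      IsMLE f Df Ω g Dg →
        ∀ x : EuclideanSpace ℝ (Fin n),
          uMinus f Df (gammaOn f Df Ω) Ω x ≤ g x ∧
          g x ≤ uPlus f Df (gammaOn f Df Ω) Ω x := by
  rintro g Dg ⟨hagree, hgam⟩ x
  set κ := gammaOn f Df Ω
  have hG : ∀ a ∈ Ω, ∀ t, 2 * |fieldEval g Dg x t - fieldEval f Df a t|
      ≤ κ * (‖x - t‖ ^ 2 + ‖a - t‖ ^ 2) := by
    intro a ha t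
    have hFa : fieldEval g Dg a t = fieldEval f Df a t := by
      simp only [fieldEval, hagree a ha]
    rw [← hgam, ← hFa]
    exact two_mul_abs_fieldEval_sub_le_gammaOn_univ (hgam ▸ hκpos) x a t
  have hPsi : ∀ a ∈ Ω, PsiMinus f Df κ x a (Dg x) ≤ g x ∧ g x ≤ PsiPlus f Df κ x a (Dg x) :=
    fun a ha =>
      ⟨PsiMinus_le_of_forall_le f Df g Dg hκpos.ne' fun t => by
          linarith [hG a ha t, neg_abs_le (fieldEval g Dg x t - fieldEval f Df a t)],
        le_PsiPlus_of_forall_le f Df g Dg hκpos.ne' fun t => by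
          linarith [hG a ha t, le_abs_self (fieldEval g Dg x t - fieldEval f Df a t)]⟩
  have hΛ : Dg x ∈ Lambda f Df κ Ω x := mem_Lambda_of_PsiMinus_le_PsiPlus f Df hκpos
    fun a ha b hb => (hPsi b hb).1.trans (hPsi a ha).2
  obtain ⟨a₀, ha₀⟩ := hΩne
  have hsup : supPsiMinus f Df κ Ω x (Dg x) ≤ g x :=
    csSup_le ⟨_, a₀, ha₀, rfl⟩ (by rintro _ ⟨a, ha, rfl⟩; exact (hPsi a ha).1)
  have hinf : g x ≤ infPsiPlus f Df κ Ω x (Dg x) :=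
    le_csInf ⟨_, a₀, ha₀, rfl⟩ (by rintro _ ⟨a, ha, rfl⟩; exact (hPsi a ha).2)
  exact ⟨(uMinus_le_supPsiMinus f Df hκpos ⟨a₀, ha₀⟩ hΛ).trans hsup,
    hinf.trans (infPsiPlus_le_uPlus f Df hκpos ⟨a₀, ha₀⟩ hΛ)⟩

/-- Let `F = (f, Df)` be a Taylorian 1-field on a nonempty `Ω ⊆ ℝⁿ` with
`κ := Γ¹(F;Ω) > 0`. Then every minimal Lipschitz extension `G = (g, Dg)` of `F` on `ℝⁿ`
satisfies `u⁻(x) ≤ g_x ≤ u⁺(x)` for all `x ∈ ℝⁿ`. -/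
theorem stmt_14 {n : ℕ} (hn : 1 ≤ n) (Ω : Set (EuclideanSpace ℝ (Fin n)))
    (hΩne : Ω.Nonempty)
    (f : EuclideanSpace ℝ (Fin n) → ℝ)
    (Df : EuclideanSpace ℝ (Fin n) → EuclideanSpace ℝ (Fin n))
    (hTay : BddAbove (gammaVals f Df Ω))
    (hκpos : 0 < gammaOn f Df Ω) :
    ∀ (g : EuclideanSpace ℝ (Fin n) → ℝ)
      (Dg : EuclideanSpace ℝ (Fin n) → EuclideanSpace ℝ (Fin n)),
      IsMLE f Df Ω g Dg →
        ∀ x : EuclideanSpace ℝ (Fin n),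
          uMinus f Df (gammaOn f Df Ω) Ω x ≤ g x ∧
          g x ≤ uPlus f Df (gammaOn f Df Ω) Ω x :=
  stmt_14_general Ω hΩne f Df hκpos
end
end

section
/- Let ω ⊆ ℝᵐ be nonempty and let u : ω → ℝⁿ be Lipschitz, with Lip(u;ω) := sup_{x≠y∈ω} ‖u(x) − u(y)‖/‖x−y‖. Define Ω := {(x,0) : x ∈ ω} ⊆ ℝᵐ × ℝⁿ = ℝ^{m+n} and the 1-field F on Ω by f_{(x,0)} := 0 and D_{(x,0)}f := (0, u(x)) for x ∈ ω. Then Γ¹(F;Ω) = Lip(u;ω). -/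
noncomputable section

open scoped RealInnerProductSpace

/-- `ℝ^{m+n} = ℝᵐ × ℝⁿ` with the Euclidean (L²) norm. -/
abbrev ProdSp (m n : ℕ) :=
  WithLp 2 (EuclideanSpace ℝ (Fin m) × EuclideanSpace ℝ (Fin n))

/-- The embedding `x ↦ (x, 0)` of `ℝᵐ` into `ℝ^{m+n}`. -/
def kirszEmb (m n : ℕ) (x : EuclideanSpace ℝ (Fin m)) : ProdSp m n :=
  (WithLp.equiv 2 (EuclideanSpace ℝ (Fin m) × EuclideanSpace ℝ (Fin n))).symm (x, 0)

/-- The `ℝⁿ`-component of an element of `ℝ^{m+n}`. -/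
def sndComp {m n : ℕ} (z : ProdSp m n) : EuclideanSpace ℝ (Fin n) :=
  ((WithLp.equiv 2 (EuclideanSpace ℝ (Fin m) × EuclideanSpace ℝ (Fin n))) z).2

/-- The gradient field `z ↦ (0, u(z^{(m)}))` of the 1-field associated with `u`. -/
def kirszDf {m n : ℕ} (u : EuclideanSpace ℝ (Fin m) → EuclideanSpace ℝ (Fin n)) :
    ProdSp m n → ProdSp m n :=
  fun z =>
    (WithLp.equiv 2 (EuclideanSpace ℝ (Fin m) × EuclideanSpace ℝ (Fin n))).symm
      (0, u ((WithLp.equiv 2 (EuclideanSpace ℝ (Fin m) × EuclideanSpace ℝ (Fin n))) z).1)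

/-!
Only the `ℝⁿ`-component `q` of the evaluation point `a = (p, q)` sees the field:
`F(x,0)(a) - F(y,0)(a) = ⟪u x - u y, q⟫`, while the denominator is
`‖x - p‖² + ‖y - p‖² + 2‖q‖² ≥ ‖x - y‖² / 2 + 2‖q‖²`. Cauchy–Schwarz and AM–GM bound the
quotient by `‖u x - u y‖ / ‖x - y‖`, with equality at `p` the midpoint of `x, y` and `q` parallel
to `u x - u y` of length `‖x - y‖ / 2`. So `Γ¹(F; (x,0), (y,0))` is the difference quotient of `u`
at `x, y`, and the two suprema range over the same set.
-/

section InnerQuotient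

variable {E F : Type*} [NormedAddCommGroup E] [NormedAddCommGroup F] [InnerProductSpace ℝ F]

lemma sq_norm_sub_le_two_mul_add_sq (x y p : E) :
    ‖x - y‖ ^ 2 ≤ 2 * (‖x - p‖ ^ 2 + ‖y - p‖ ^ 2) := by
  have htri : ‖x - y‖ ≤ ‖x - p‖ + ‖y - p‖ := by
    simpa only [dist_eq_norm] using dist_triangle_right x y p
  nlinarith [norm_nonneg (x - y), sq_nonneg (‖x - p‖ - ‖y - p‖)]

lemma two_mul_abs_inner_div_le {x y : E} (hxy : x ≠ y) (p : E) (d q : F) :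
    2 * |⟪d, q⟫| / (‖x - p‖ ^ 2 + ‖y - p‖ ^ 2 + 2 * ‖q‖ ^ 2) ≤ ‖d‖ / ‖x - y‖ := by
  have hs : 0 < ‖x - y‖ := norm_sub_pos_iff.mpr hxy
  have hmid := sq_norm_sub_le_two_mul_add_sq x y p
  have hinner : |⟪d, q⟫| ≤ ‖d‖ * ‖q‖ := abs_real_inner_le_norm d q
  rw [div_le_div_iff₀ (by nlinarith [sq_nonneg ‖q‖]) hs]
  nlinarith [mul_le_mul_of_nonneg_right hinner hs.le, norm_nonneg d,
    mul_nonneg (norm_nonneg d) (sq_nonneg (‖x - y‖ - 2 * ‖q‖))]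

variable [NormedSpace ℝ E]

lemma two_mul_abs_inner_div_midpoint {x y : E} (hxy : x ≠ y) (d : F) :
    2 * |⟪d, (‖x - y‖ / (2 * ‖d‖)) • d⟫| / (‖x - midpoint ℝ x y‖ ^ 2 + ‖y - midpoint ℝ x y‖ ^ 2
      + 2 * ‖(‖x - y‖ / (2 * ‖d‖)) • d‖ ^ 2) = ‖d‖ / ‖x - y‖ := by
  have hs : 0 < ‖x - y‖ := norm_sub_pos_iff.mpr hxy
  rcases eq_or_ne d 0 with rfl | hd0
  · simp
  have hd : 0 < ‖d‖ := norm_pos_iff.mpr hd0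
  have hx : ‖x - midpoint ℝ x y‖ = ‖x - y‖ / 2 := by
    rw [← dist_eq_norm, dist_left_midpoint, dist_eq_norm]; norm_num; ring
  have hy : ‖y - midpoint ℝ x y‖ = ‖x - y‖ / 2 := by
    rw [← dist_eq_norm, dist_right_midpoint, dist_eq_norm]; norm_num; ring
  rw [hx, hy, real_inner_smul_right, real_inner_self_eq_norm_sq, norm_smul, Real.norm_eq_abs,
    abs_of_pos (by positivity), abs_of_pos (by positivity)]
  field_simp
  ring

end InnerQuotient

section Kirszbraun

variable {m n : ℕ} (u : EuclideanSpace ℝ (Fin m) → EuclideanSpace ℝ (Fin n))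

lemma kirszEmb_injective : (kirszEmb m n).Injective :=
  fun _ _ h => congrArg WithLp.fst h

lemma fieldEval_kirszEmb_sub (x y : EuclideanSpace ℝ (Fin m)) (a : ProdSp m n) :
    fieldEval (fun _ => 0) (kirszDf u) (kirszEmb m n x) a
      - fieldEval (fun _ => 0) (kirszDf u) (kirszEmb m n y) a = ⟪u x - u y, a.snd⟫ := by
  simp [fieldEval, kirszDf, kirszEmb, WithLp.prod_inner_apply, inner_sub_left]

lemma norm_kirszEmb_sub_sq_add (x y : EuclideanSpace ℝ (Fin m)) (a : ProdSp m n) :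
    ‖kirszEmb m n x - a‖ ^ 2 + ‖kirszEmb m n y - a‖ ^ 2
      = ‖x - a.fst‖ ^ 2 + ‖y - a.fst‖ ^ 2 + 2 * ‖a.snd‖ ^ 2 := by
  simp only [WithLp.prod_norm_sq_eq_of_L2, WithLp.sub_fst, WithLp.sub_snd, kirszEmb,
    WithLp.equiv_symm_apply, WithLp.toLp_fst, WithLp.toLp_snd, zero_sub, norm_neg]
  ring

lemma gammaPair_kirszEmb {x y : EuclideanSpace ℝ (Fin m)} (hxy : x ≠ y) :
    gammaPair (fun _ => 0) (kirszDf u) (kirszEmb m n x) (kirszEmb m n y)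
      = ‖u x - u y‖ / ‖x - y‖ := by
  simp only [gammaPair, fieldEval_kirszEmb_sub, norm_kirszEmb_sub_sq_add]
  refine le_antisymm (ciSup_le fun a => two_mul_abs_inner_div_le hxy _ _ _) ?_
  have hbdd : BddAbove (Set.range fun a : ProdSp m n => 2 * |⟪u x - u y, a.snd⟫|
      / (‖x - a.fst‖ ^ 2 + ‖y - a.fst‖ ^ 2 + 2 * ‖a.snd‖ ^ 2)) :=
    ⟨_, Set.forall_mem_range.mpr fun a => two_mul_abs_inner_div_le hxy _ _ _⟩
  exact le_ciSup_of_le hbdd (WithLp.toLp 2 (midpoint ℝ x y,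
    (‖x - y‖ / (2 * ‖u x - u y‖)) • (u x - u y))) (two_mul_abs_inner_div_midpoint hxy _).ge

lemma gammaVals_kirszEmb_image (ω : Set (EuclideanSpace ℝ (Fin m))) :
    gammaVals (fun _ => 0) (kirszDf u) (kirszEmb m n '' ω) = lipVals u ω := by
  ext t
  constructor
  · rintro ⟨_, ⟨x, hx, rfl⟩, _, ⟨y, hy, rfl⟩, hne, rfl⟩
    have hxy : x ≠ y := fun h => hne (congrArg _ h)
    exact ⟨x, hx, y, hy, hxy, gammaPair_kirszEmb u hxy⟩
  · rintro ⟨x, hx, y, hy, hxy, rfl⟩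
    exact ⟨_, Set.mem_image_of_mem _ hx, _, Set.mem_image_of_mem _ hy,
      kirszEmb_injective.ne hxy, (gammaPair_kirszEmb u hxy).symm⟩

end Kirszbraun

theorem stmt_16_general {m n : ℕ}
    (ω : Set (EuclideanSpace ℝ (Fin m)))
    (u : EuclideanSpace ℝ (Fin m) → EuclideanSpace ℝ (Fin n)) :
    gammaOn (fun _ : ProdSp m n => (0 : ℝ)) (kirszDf u) (kirszEmb m n '' ω)
      = lipOn u ω :=
  congrArg sSup (gammaVals_kirszEmb_image u ω)

/-- Let `ω ⊆ ℝᵐ` be nonempty and `u : ω → ℝⁿ` Lipschitz. Let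
`Ω := {(x, 0) : x ∈ ω} ⊆ ℝ^{m+n}` and let `F` be the 1-field on `Ω` given by `f_{(x,0)} := 0`
and `D_{(x,0)}f := (0, u(x))`. Then `Γ¹(F;Ω) = Lip(u;ω)`. -/
theorem stmt_16 {m n : ℕ} (hm : 1 ≤ m) (hn : 1 ≤ n)
    (ω : Set (EuclideanSpace ℝ (Fin m))) (hωne : ω.Nonempty)
    (u : EuclideanSpace ℝ (Fin m) → EuclideanSpace ℝ (Fin n))
    (hu : BddAbove (lipVals u ω)) :
    gammaOn (fun _ : ProdSp m n => (0 : ℝ)) (kirszDf u) (kirszEmb m n '' ω)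
      = lipOn u ω :=
  stmt_16_general ω u
end
end
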